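/- arXiv:0708.1343 — 10 statements merged into one kernel-verified Lean document; each statement's English description precedes it below -/
import Mathlib

section
/- Let M be an element of the subring 𝓜. Then M is a unit of the ring 𝓜 if and only if det(M) is a nonzero element of F; that is, the group of units of 𝓜 equals 𝓜 ∩ GL_n(F[t]). -/
/-!
A unit of `𝓜` has a unit determinant, which in `F[t]` is a nonzero constant. Conversely, if
`det M` is a unit then the adjugate inverse `M⁻¹` lies in `GL_n(F[t])`; reducing modulo `t`
(evaluating at `0`) commutes with inversion, and `M(0)` is upper triangular, so `M⁻¹(0)` is upper
triangular too, i.e. `M⁻¹ ∈ 𝓜`.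
-/

open Polynomial Matrix

/-- Membership in the subring `𝓜` of `F[t]^{n×n}`: every entry strictly below the
diagonal vanishes at `t = 0` (i.e. is a multiple of `t`). -/
def InM {F : Type*} [Field F] {n : ℕ} (M : Matrix (Fin n) (Fin n) (Polynomial F)) : Prop :=
  ∀ a b : Fin n, b < a → (M a b).eval 0 = 0

theorem Polynomial.isUnit_iff_exists_ne_zero_eq_C {K : Type*} [Field K] {p : K[X]} :
    IsUnit p ↔ ∃ c : K, c ≠ 0 ∧ p = C c := by
  simp only [Polynomial.isUnit_iff, isUnit_iff_ne_zero, eq_comm (a := p)]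

namespace Matrix

variable {m R S : Type*} [Fintype m] [DecidableEq m] [CommRing R] [CommRing S]

theorem map_nonsing_inv (f : R →+* S) {M : Matrix m m R} (h : IsUnit M.det) :
    M⁻¹.map f = (M.map f)⁻¹ := by
  refine (inv_eq_right_inv ?_).symm
  rw [← Matrix.map_mul, mul_nonsing_inv M h, Matrix.map_one f f.map_zero f.map_one]

theorem BlockTriangular.map_nonsing_inv {α : Type*} [LinearOrder α] {b : m → α}
    (f : R →+* S) {M : Matrix m m R} (hM : (M.map f).BlockTriangular b) :
    (M⁻¹.map f).BlockTriangular b := by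
  by_cases h : IsUnit M.det
  · have hf : IsUnit (M.map f).det := by
      rw [← RingHom.mapMatrix_apply, ← RingHom.map_det]
      exact h.map f
    have : Invertible (M.map f) := invertibleOfIsUnitDet _ hf
    rw [Matrix.map_nonsing_inv f h]
    exact blockTriangular_inv_of_blockTriangular hM
  · rw [nonsing_inv_apply_not_isUnit M h, Matrix.map_zero _ f.map_zero]
    exact blockTriangular_zero

end Matrix

section InM

variable {F : Type*} [Field F] {n : ℕ}

theorem inM_iff_blockTriangular_map_eval_zero {M : Matrix (Fin n) (Fin n) F[X]} :
    InM M ↔ (M.map (evalRingHom 0)).BlockTriangular id :=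
  ⟨fun h _ _ hij => h _ _ hij, fun h _ _ hij => h hij⟩

theorem InM.nonsing_inv {M : Matrix (Fin n) (Fin n) F[X]} (hM : InM M) : InM M⁻¹ :=
  inM_iff_blockTriangular_map_eval_zero.2 <|
    (inM_iff_blockTriangular_map_eval_zero.1 hM).map_nonsing_inv _

end InM

theorem units_of_M_eq_M_inter_GL_general {F : Type*} [Field F] {n : ℕ}
    (M : Matrix (Fin n) (Fin n) (Polynomial F)) (hM : InM M) :
    (∃ N : Matrix (Fin n) (Fin n) (Polynomial F), InM N ∧ M * N = 1 ∧ N * M = 1) ↔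
      ∃ c : F, c ≠ 0 ∧ M.det = Polynomial.C c := by
  rw [← Polynomial.isUnit_iff_exists_ne_zero_eq_C]
  constructor
  · rintro ⟨N, -, hMN, -⟩
    exact isUnit_det_of_right_inverse hMN
  · intro hdet
    exact ⟨M⁻¹, hM.nonsing_inv, mul_nonsing_inv M hdet, nonsing_inv_mul M hdet⟩

/-- For `M ∈ 𝓜`, `M` is a unit of the ring `𝓜` (i.e. it has a two-sided
inverse lying in `𝓜`) if and only if `det M` is a nonzero constant, i.e.
`𝓜^× = 𝓜 ∩ GL_n(F[t])`. -/
theorem units_of_M_eq_M_inter_GL {F : Type*} [Field F] [Fintype F] {n : ℕ} (hn : 2 ≤ n)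
    (M : Matrix (Fin n) (Fin n) (Polynomial F)) (hM : InM M) :
    (∃ N : Matrix (Fin n) (Fin n) (Polynomial F), InM N ∧ M * N = 1 ∧ N * M = 1) ↔
      ∃ c : F, c ≠ 0 ∧ M.det = Polynomial.C c :=
  units_of_M_eq_M_inter_GL_general M hM
end

section
/- Let M ∈ 𝓜 be delay-free. Then the rank of M over the field of rational functions F(t) equals the rank over F of the constant matrix M(0) obtained by evaluating every entry at t = 0, and both equal |Supp(M)|, the number of nonzero rows of M. In particular, the nonzero rows of a delay-free matrix M ∈ 𝓜 are linearly independent over F[t]. -/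
/-!
The principal submatrix `A` of `M` on the support is upper triangular modulo `t` with
nonzero diagonal, so `det A` does not vanish at `t = 0`. Hence the rows of `M` in the
support stay linearly independent after any ring map `φ` into a domain with
`φ (det A) ≠ 0`: the identity of `F[t]`, its embedding into `F(t)` and evaluation at `0`.
The remaining rows are zero, so over `F(t)` and over `F` the rank is the size of the support.
-/

open Polynomial Matrix

/-- `M ∈ 𝓜` is delay-free if `m_{aa}(0) ≠ 0` for every index `a` of a nonzero row. -/
def DelayFree {F : Type*} [Field F] {n : ℕ}
    (M : Matrix (Fin n) (Fin n) (Polynomial F)) : Prop :=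
  ∀ a : Fin n, M a ≠ 0 → (M a a).eval 0 ≠ 0

namespace Matrix

variable {l m n R : Type*}

theorem linearIndependent_rows_of_det_submatrix_ne_zero [CommRing R] [IsDomain R]
    [Fintype l] [DecidableEq l] (N : Matrix m n R) (f : l → m) (g : l → n)
    (h : (N.submatrix f g).det ≠ 0) :
    LinearIndependent R (fun i => N (f i)) :=
  (linearIndependent_rows_of_det_ne_zero h).of_comp (LinearMap.funLeft R R g)

theorem rank_eq_card_of_linearIndependent_rows [Field R] [Fintype l] [Fintype m] [Fintype n]
    (N : Matrix m n R) (f : l → m) (h0 : ∀ i ∉ Set.range f, N i = 0)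
    (hli : LinearIndependent R fun i => N (f i)) :
    N.rank = Fintype.card l := by
  have hrange : Set.range N ⊆ insert 0 (Set.range fun i => N (f i)) := by
    rintro _ ⟨i, rfl⟩
    by_cases hi : i ∈ Set.range f
    · obtain ⟨k, rfl⟩ := hi
      exact Or.inr ⟨k, rfl⟩
    · exact Or.inl (h0 i hi)
  have hspan : Submodule.span R (Set.range N) = Submodule.span R (Set.range fun i => N (f i)) :=
    le_antisymm ((Submodule.span_mono hrange).trans_eq Submodule.span_insert_zero)
      (Submodule.span_mono (Set.range_comp_subset_range _ _))
  rw [rank_eq_finrank_span_row, row_def, hspan, finrank_span_eq_card hli]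

theorem rank_map_eq_card_of_det_submatrix_ne_zero {K : Type*} [CommRing R] [Field K]
    [Fintype l] [DecidableEq l] [Fintype m] [Fintype n] (φ : R →+* K) (N : Matrix m n R)
    (f : l → m) (g : l → n) (h0 : ∀ i ∉ Set.range f, N i = 0)
    (h : φ (N.submatrix f g).det ≠ 0) :
    (N.map φ).rank = Fintype.card l := by
  refine rank_eq_card_of_linearIndependent_rows _ f (fun i hi => ?_) ?_
  · ext j
    simp [h0 i hi]
  · apply linearIndependent_rows_of_det_submatrix_ne_zero _ _ g
    rwa [submatrix_map, ← RingHom.mapMatrix_apply, ← RingHom.map_det]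

end Matrix

open Classical in
theorem DelayFree.eval_det_submatrix_ne_zero {F : Type*} [Field F] {n : ℕ}
    {M : Matrix (Fin n) (Fin n) F[X]} (hdf : DelayFree M) (hM : InM M) :
    evalRingHom 0 (M.submatrix (Subtype.val : {a // M a ≠ 0} → Fin n) Subtype.val).det ≠ 0 := by
  have htri : ((evalRingHom 0).mapMatrix
      (M.submatrix (Subtype.val : {a // M a ≠ 0} → Fin n) Subtype.val)).IsUpperTriangular :=
    fun a b hba => hM a b hba
  rw [RingHom.map_det, det_of_isUpperTriangular htri]
  exact Finset.prod_ne_zero_iff.2 fun a _ => hdf a a.2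

theorem rank_of_delayFree_general {F : Type*} [Field F] {n : ℕ}
    (M : Matrix (Fin n) (Fin n) (Polynomial F)) (hM : InM M) (hdf : DelayFree M) :
    (M.map (fun p => algebraMap (Polynomial F) (FractionRing (Polynomial F)) p)).rank =
      (M.map (fun p => p.eval 0)).rank ∧
    (M.map (fun p => p.eval 0)).rank = Nat.card {a : Fin n // M a ≠ 0} ∧
    LinearIndependent (Polynomial F) (fun a : {a : Fin n // M a ≠ 0} => M a.val) := by
  classical
  have hsupp : ∀ a ∉ Set.range (Subtype.val : {a // M a ≠ 0} → Fin n), M a = 0 :=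
    fun a ha => not_not.1 fun h => ha ⟨⟨a, h⟩, rfl⟩
  have heval := hdf.eval_det_submatrix_ne_zero hM
  have hdet := ne_zero_of_map heval
  have hF := rank_map_eq_card_of_det_submatrix_ne_zero _ M _ _ hsupp heval
  have hK := rank_map_eq_card_of_det_submatrix_ne_zero (algebraMap F[X] (FractionRing F[X])) M _ _
    hsupp ((map_ne_zero_iff _ (IsFractionRing.injective _ _)).2 hdet)
  rw [← Nat.card_eq_fintype_card] at hF hK
  exact ⟨hK.trans hF.symm, hF, linearIndependent_rows_of_det_submatrix_ne_zero M _ _ hdet⟩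

/-- For a delay-free `M ∈ 𝓜`, the rank of `M` over the rational function
field `F(t)` equals the rank over `F` of the constant matrix `M(0)`, and both equal
`|Supp(M)|`, the number of nonzero rows of `M`.  In particular, the nonzero rows of `M`
are linearly independent over `F[t]`. -/
theorem rank_of_delayFree {F : Type*} [Field F] [Fintype F] {n : ℕ} (hn : 2 ≤ n)
    (M : Matrix (Fin n) (Fin n) (Polynomial F)) (hM : InM M) (hdf : DelayFree M) :
    (M.map (fun p => algebraMap (Polynomial F) (FractionRing (Polynomial F)) p)).rank =
      (M.map (fun p => p.eval 0)).rank ∧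
    (M.map (fun p => p.eval 0)).rank = Nat.card {a : Fin n // M a ≠ 0} ∧
    LinearIndependent (Polynomial F) (fun a : {a : Fin n // M a ≠ 0} => M a.val) :=
  rank_of_delayFree_general M hM hdf
end

section
/- Let M ∈ 𝓜 be semi-reduced and a unit of the ring 𝓜 (equivalently, det(M) is a nonzero element of F). Then M is a diagonal matrix with constant nonzero diagonal entries; that is, M = diag(c_1,…,c_n) for some c_1,…,c_n ∈ F\{0}. -/
open Polynomial Matrix

/-- The degree matrix `𝒟(M)`: `𝒟(M)_{ab} = n·deg(m_{ab}) − a + b`, with the zero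
polynomial having degree `−∞` (here `⊥` in `WithBot ℤ`). -/
noncomputable def degMat {F : Type*} [Field F] {n : ℕ}
    (M : Matrix (Fin n) (Fin n) (Polynomial F)) : Matrix (Fin n) (Fin n) (WithBot ℤ) :=
  Matrix.of fun a b =>
    WithBot.map (fun d : ℕ => (n : ℤ) * (d : ℤ) - ((a : ℕ) : ℤ) + ((b : ℕ) : ℤ))
      ((M a b).degree)

/-- `M` is semi-reduced if the maxima of the non-trivial rows of `𝒟(M)` occur in
pairwise different columns. -/
def SemiReduced {F : Type*} [Field F] {n : ℕ}
    (M : Matrix (Fin n) (Fin n) (Polynomial F)) : Prop :=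
  ∀ a a' b : Fin n, a ≠ a' → M a ≠ 0 → M a' ≠ 0 →
    degMat M a b = Finset.univ.sup (fun c => degMat M a c) →
    degMat M a' b = Finset.univ.sup (fun c => degMat M a' c) → False

/-!
Since `M` is a unit, its rows are nonzero, and semi-reducedness yields a permutation `π` such that
column `i` carries the maximum of row `π i` of `𝒟(M)`. Along a permutation the shifts `-a + b` of
`𝒟(M)` cancel, so every other term of the Leibniz expansion of `det M` has strictly smaller degree,
and `n · deg det M = ∑ᵢ 𝒟(M)_{π i, i}`. For `M ∈ 𝓜` every finite entry of `𝒟(M)` is nonnegative,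
and zero only at constant diagonal entries. As `det M` is a nonzero constant, all row maxima
vanish, which forces `M` to be diagonal with constant entries.
-/

open Equiv

theorem Matrix.degree_det_eq_of_degree_prod_perm_lt {R ι : Type*} [CommRing R] [Fintype ι]
    [DecidableEq ι] (M : Matrix ι ι R[X]) (π : Perm ι)
    (h : ∀ σ ≠ π, (∏ i, M (σ i) i).degree < (∏ i, M (π i) i).degree) :
    M.det.degree = (∏ i, M (π i) i).degree := by
  have degree_sign_mul : ∀ (σ : Perm ι) (p : R[X]), ((Perm.sign σ : ℤ) * p).degree = p.degree :=
    fun σ p => by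
      rw [← C_eq_intCast, degree_C_mul_of_isUnit]
      exact (Perm.sign σ).isUnit.map (Int.castRingHom R)
  rw [det_apply', ← Finset.add_sum_erase _ _ (Finset.mem_univ π)]
  rcases (Finset.univ.erase π).eq_empty_or_nonempty with hempty | ⟨τ, hτ⟩
  · rw [hempty, Finset.sum_empty, add_zero, degree_sign_mul]
  have hrest : (∑ σ ∈ Finset.univ.erase π, ((Perm.sign σ : ℤ) : R[X]) * ∏ i, M (σ i) i).degree <
      (∏ i, M (π i) i).degree := by
    refine (degree_sum_le _ _).trans_lt ((Finset.sup_lt_iff ?_).mpr fun σ hσ => ?_)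
    · exact bot_le.trans_lt (h τ (Finset.ne_of_mem_erase hτ))
    · rw [degree_sign_mul]
      exact h σ (Finset.ne_of_mem_erase hσ)
  rw [degree_add_eq_left_of_degree_lt (by rwa [degree_sign_mul]), degree_sign_mul]

section DegreeMatrix

variable {F : Type*} [Field F] {n : ℕ} {M : Matrix (Fin n) (Fin n) F[X]}

-- Junk at zero entries, where `degMat` is `⊥`.
def intDegMat (M : Matrix (Fin n) (Fin n) F[X]) : Matrix (Fin n) (Fin n) ℤ :=
  of fun a b => (n : ℤ) * (M a b).natDegree - (a : ℕ) + (b : ℕ)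

def IsRowMax (M : Matrix (Fin n) (Fin n) F[X]) (a b : Fin n) : Prop :=
  degMat M a b = Finset.univ.sup (degMat M a)

lemma degMat_of_ne_zero {a b : Fin n} (h : M a b ≠ 0) : degMat M a b = intDegMat M a b := by
  rw [degMat, of_apply, degree_eq_natDegree h]
  rfl

lemma degMat_eq_bot_iff {a b : Fin n} : degMat M a b = ⊥ ↔ M a b = 0 := by
  rw [degMat, of_apply, WithBot.map_eq_bot_iff, degree_eq_bot]

lemma exists_isRowMax (M : Matrix (Fin n) (Fin n) F[X]) (a : Fin n) : ∃ b, IsRowMax M a b := by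
  obtain ⟨b, -, hb⟩ := Finset.exists_mem_eq_sup Finset.univ ⟨a, Finset.mem_univ a⟩ (degMat M a)
  exact ⟨b, hb.symm⟩

namespace IsRowMax

variable {a b c : Fin n}

lemma ne_zero (h : IsRowMax M a b) (hc : M a c ≠ 0) : M a b ≠ 0 := by
  rw [Ne, ← degMat_eq_bot_iff (M := M), h, ← Ne, ← bot_lt_iff_ne_bot]
  exact (bot_lt_iff_ne_bot.mpr (degMat_eq_bot_iff.not.mpr hc)).trans_le
    (Finset.le_sup (Finset.mem_univ c))

lemma ne_zero_of_row_ne_zero (h : IsRowMax M a b) (ha : M a ≠ 0) : M a b ≠ 0 := by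
  obtain ⟨c, hc⟩ := Function.ne_iff.mp ha
  exact h.ne_zero hc

lemma intDegMat_le (h : IsRowMax M a b) (hc : M a c ≠ 0) : intDegMat M a c ≤ intDegMat M a b := by
  have hle : degMat M a c ≤ degMat M a b := h ▸ Finset.le_sup (Finset.mem_univ c)
  rwa [degMat_of_ne_zero hc, degMat_of_ne_zero (h.ne_zero hc), WithBot.coe_le_coe] at hle

lemma intDegMat_lt (h : IsRowMax M a b) (hc : M a c ≠ 0) (hnc : ¬IsRowMax M a c) :
    intDegMat M a c < intDegMat M a b := by
  refine (h.intDegMat_le hc).lt_of_ne fun heq => hnc ?_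
  rw [IsRowMax, degMat_of_ne_zero hc, heq, ← degMat_of_ne_zero (h.ne_zero hc), h]

end IsRowMax

lemma sum_intDegMat_perm (σ : Perm (Fin n)) (h : ∀ i, M (σ i) i ≠ 0) :
    ∑ i, intDegMat M (σ i) i = n * (∏ i, M (σ i) i).natDegree := by
  simp only [intDegMat, of_apply, Finset.sum_add_distrib, Finset.sum_sub_distrib,
    ← Finset.mul_sum, natDegree_prod _ _ fun i _ => h i, Nat.cast_sum,
    Equiv.sum_comp σ (fun a : Fin n => ((a : ℕ) : ℤ))]
  ring

namespace InM

variable {a b : Fin n}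

lemma le_mul_natDegree (hM : InM M) (h : M a b ≠ 0) (hba : b < a) :
    n ≤ n * (M a b).natDegree := by
  refine Nat.le_mul_of_pos_right n (Nat.pos_of_ne_zero fun h0 => h ?_)
  rw [eq_C_of_natDegree_eq_zero h0, coeff_zero_eq_eval_zero, hM a b hba, map_zero]

lemma intDegMat_nonneg (hM : InM M) (h : M a b ≠ 0) : 0 ≤ intDegMat M a b := by
  have hlow := hM.le_mul_natDegree h
  simp only [intDegMat, of_apply, ← Nat.cast_mul]
  omega

lemma eq_and_natDegree_eq_zero (hM : InM M) (h : M a b ≠ 0) (h0 : intDegMat M a b = 0) :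
    a = b ∧ (M a b).natDegree = 0 := by
  have hlow := hM.le_mul_natDegree h
  simp only [intDegMat, of_apply, ← Nat.cast_mul] at h0
  refine ⟨by omega, (Nat.mul_eq_zero.mp ?_).resolve_left a.pos.ne'⟩
  omega

end InM

namespace SemiReduced

lemma eq_of_isRowMax (hsr : SemiReduced M) {a a' b : Fin n} (ha : M a ≠ 0) (ha' : M a' ≠ 0)
    (h : IsRowMax M a b) (h' : IsRowMax M a' b) : a = a' := by
  by_contra hne
  exact hsr a a' b hne ha ha' h h'

lemma exists_perm_isRowMax (hsr : SemiReduced M) (hrow : ∀ a, M a ≠ 0) :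
    ∃ π : Perm (Fin n), ∀ i, IsRowMax M (π i) i := by
  choose β hβ using exists_isRowMax M
  have hinj : Function.Injective β := fun a a' hβa =>
    hsr.eq_of_isRowMax (hrow a) (hrow a') (hβ a) (hβa ▸ hβ a')
  let e := Equiv.ofBijective β (Finite.injective_iff_bijective.mp hinj)
  refine ⟨e.symm, fun i => ?_⟩
  have hβi := hβ (e.symm i)
  rwa [show β (e.symm i) = i from e.apply_symm_apply i] at hβi

lemma degree_prod_perm_lt (hsr : SemiReduced M) (hrow : ∀ a, M a ≠ 0) {π σ : Perm (Fin n)}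
    (hπ : ∀ i, IsRowMax M (π i) i) (hσ : σ ≠ π) :
    (∏ i, M (σ i) i).degree < (∏ i, M (π i) i).degree := by
  have hπ0 : ∀ i, M (π i) i ≠ 0 := fun i => (hπ i).ne_zero_of_row_ne_zero (hrow _)
  have hπ0' : ∏ i, M (π i) i ≠ 0 := Finset.prod_ne_zero_iff.mpr fun i _ => hπ0 i
  by_cases hσ0 : ∀ i, M (σ i) i ≠ 0
  swap
  · obtain ⟨i, hi⟩ : ∃ i, M (σ i) i = 0 := by simpa using hσ0
    have hσ0' : ∏ i, M (σ i) i = 0 := Finset.prod_eq_zero (Finset.mem_univ i) hi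
    rwa [hσ0', degree_zero, bot_lt_iff_ne_bot, Ne, degree_eq_bot]
  have hmax : ∀ a, IsRowMax M a (π.symm a) := fun a => by simpa using hπ (π.symm a)
  obtain ⟨i₀, hi₀⟩ : ∃ i, σ i ≠ π i := by
    by_contra! h
    exact hσ (Equiv.ext h)
  have hsum : ∑ i, intDegMat M (σ i) i < ∑ i, intDegMat M (π i) i :=
    calc ∑ i, intDegMat M (σ i) i < ∑ i, intDegMat M (σ i) (π.symm (σ i)) := by
          refine Finset.sum_lt_sum (fun i _ => (hmax _).intDegMat_le (hσ0 i))
            ⟨i₀, Finset.mem_univ _, (hmax _).intDegMat_lt (hσ0 i₀) fun h => hi₀ ?_⟩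
          exact hsr.eq_of_isRowMax (hrow _) (hrow _) h (hπ i₀)
      _ = ∑ i, intDegMat M (π i) i := by
          rw [Equiv.sum_comp σ (fun a => intDegMat M a (π.symm a)),
            ← Equiv.sum_comp π (fun a => intDegMat M a (π.symm a))]
          simp
  rw [sum_intDegMat_perm σ hσ0, sum_intDegMat_perm π hπ0] at hsum
  rw [degree_eq_natDegree hπ0',
    degree_eq_natDegree (Finset.prod_ne_zero_iff.mpr fun i _ => hσ0 i), Nat.cast_lt]
  exact_mod_cast lt_of_mul_lt_mul_left hsum (Int.natCast_nonneg n)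

lemma card_mul_natDegree_det (hsr : SemiReduced M) (hrow : ∀ a, M a ≠ 0) {π : Perm (Fin n)}
    (hπ : ∀ i, IsRowMax M (π i) i) : (n : ℤ) * M.det.natDegree = ∑ i, intDegMat M (π i) i := by
  rw [natDegree_eq_of_degree_eq (M.degree_det_eq_of_degree_prod_perm_lt π
    fun σ hσ => hsr.degree_prod_perm_lt hrow hπ hσ),
    sum_intDegMat_perm π fun i => (hπ i).ne_zero_of_row_ne_zero (hrow _)]

end SemiReduced

end DegreeMatrix

lemma Matrix.exists_eq_diagonal_C {R ι : Type*} [Semiring R] [DecidableEq ι]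
    {M : Matrix ι ι R[X]} (hrow : ∀ a, M a ≠ 0)
    (h : ∀ a b, M a b ≠ 0 → a = b ∧ (M a b).natDegree = 0) :
    ∃ c : ι → R, (∀ i, c i ≠ 0) ∧ M = diagonal fun i => C (c i) := by
  have hdiag : ∀ a, M a a ≠ 0 := fun a => by
    obtain ⟨b, hb⟩ := Function.ne_iff.mp (hrow a)
    exact (h a b hb).1 ▸ hb
  refine ⟨fun i => (M i i).coeff 0, fun i hi => hdiag i ?_, ?_⟩
  · rw [eq_C_of_natDegree_eq_zero (h i i (hdiag i)).2, show (M i i).coeff 0 = 0 from hi, map_zero]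
  ext a b : 1
  rcases eq_or_ne a b with rfl | hab
  · rw [diagonal_apply_eq]
    exact eq_C_of_natDegree_eq_zero (h a a (hdiag a)).2
  · rw [diagonal_apply_ne _ hab]
    exact not_ne_iff.mp fun hne => hab (h a b hne).1

theorem semiReduced_unit_is_diagonal_general {F : Type*} [Field F] {n : ℕ}
    (M : Matrix (Fin n) (Fin n) (Polynomial F)) (hM : InM M) (hsr : SemiReduced M)
    (hunit : ∃ N : Matrix (Fin n) (Fin n) (Polynomial F), InM N ∧ M * N = 1 ∧ N * M = 1) :
    ∃ c : Fin n → F, (∀ i, c i ≠ 0) ∧ M = Matrix.diagonal (fun i => Polynomial.C (c i)) := by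
  obtain ⟨N, -, hMN, -⟩ := hunit
  have hdet : IsUnit M.det := IsUnit.of_mul_eq_one N.det (by rw [← det_mul, hMN, det_one])
  have hrow : ∀ a, M a ≠ 0 := fun a h => hdet.ne_zero (det_eq_zero_of_row_eq_zero a (congrFun h))
  obtain ⟨π, hπ⟩ := hsr.exists_perm_isRowMax hrow
  have hmax : ∀ a, IsRowMax M a (π.symm a) := fun a => by simpa using hπ (π.symm a)
  have hmax0 : ∀ a, intDegMat M a (π.symm a) = 0 := by
    have hsum := hsr.card_mul_natDegree_det hrow hπ
    rw [natDegree_eq_zero_of_isUnit hdet, Nat.cast_zero, mul_zero, eq_comm,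
      Finset.sum_eq_zero_iff_of_nonneg fun i _ =>
        hM.intDegMat_nonneg ((hπ i).ne_zero_of_row_ne_zero (hrow _))] at hsum
    exact fun a => by simpa using hsum (π.symm a) (Finset.mem_univ _)
  refine Matrix.exists_eq_diagonal_C hrow fun a b hab => hM.eq_and_natDegree_eq_zero hab ?_
  exact le_antisymm (hmax0 a ▸ (hmax a).intDegMat_le hab) (hM.intDegMat_nonneg hab)

/-- If `M ∈ 𝓜` is semi-reduced and a unit of the ring `𝓜`, then `M` is a
diagonal matrix with nonzero constant diagonal entries. -/
theorem semiReduced_unit_is_diagonal {F : Type*} [Field F] [Fintype F] {n : ℕ} (hn : 2 ≤ n)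
    (M : Matrix (Fin n) (Fin n) (Polynomial F)) (hM : InM M) (hsr : SemiReduced M)
    (hunit : ∃ N : Matrix (Fin n) (Fin n) (Polynomial F), InM N ∧ M * N = 1 ∧ N * M = 1) :
    ∃ c : Fin n → F, (∀ i, c i ≠ 0) ∧ M = Matrix.diagonal (fun i => Polynomial.C (c i)) :=
  semiReduced_unit_is_diagonal_general M hM hsr hunit
end

section
/- Every unit of the ring 𝓜 can be written as a finite product of elementary units of 𝓜. -/
open Polynomial Matrix

/-- Elementary units of `𝓜`: (i) `I + (α−1)E_{aa}` with `α ≠ 0`;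
(ii) `I + t^N α E_{ab}` with `N ≥ 0`, `a < b`; (iii) `I + t^N α E_{ab}` with `N > 0`,
`b < a`. -/
def IsElemUnit {F : Type*} [Field F] {n : ℕ}
    (E : Matrix (Fin n) (Fin n) (Polynomial F)) : Prop :=
  (∃ (a : Fin n) (α : F), α ≠ 0 ∧
      E = 1 + Matrix.single a a (Polynomial.C α - 1)) ∨
  (∃ (a b : Fin n) (N : ℕ) (α : F), a < b ∧
      E = 1 + Matrix.single a b (Polynomial.X ^ N * Polynomial.C α)) ∨
  (∃ (a b : Fin n) (N : ℕ) (α : F), b < a ∧ 0 < N ∧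
      E = 1 + Matrix.single a b (Polynomial.X ^ N * Polynomial.C α))

/-!
Let `G` be the monoid generated by the elementary units. Inverses of elementary units are
elementary, so `P * M ∈ G` or `M * P ∈ G` with `P ∈ G` forces `M ∈ G`. A unit `M` of `𝓜` has
`M(0)` upper triangular and invertible, so its diagonal entries do not vanish at `t = 0`.
We reduce `M` to the identity column by column. In column `j`, entries above the diagonal are
cleared by adding multiples of the earlier columns, which are already standard basis vectors;
an entry `M a j` below the diagonal is cleared by a Euclidean algorithm on the rows `j` and `a`,
which can be run with `t ∣ M a j` throughout because `(M j j)(0) ≠ 0`. The pivot `M j j` then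
divides `det M`, hence is a nonzero constant, and a diagonal elementary unit scales it to `1`.
-/

namespace Matrix

variable {ι : Type*} [Fintype ι] [DecidableEq ι]

section Semiring

variable {R : Type*} [Semiring R] {s : Set ι} {P M : Matrix ι ι R}

section

variable (hP : ∀ i k, (i ∉ s ∨ k ∉ s) → P i k = (1 : Matrix ι ι R) i k)
include hP

theorem mul_apply_of_notMem {i : ι} (hi : i ∉ s) (c : ι) :
    (P * M) i c = M i c := by
  simp only [mul_apply, hP i _ (Or.inl hi), one_apply, ite_mul, one_mul, zero_mul,
    Finset.sum_ite_eq, Finset.mem_univ, if_true]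

theorem mul_apply_of_forall_mem_eq_zero {c : ι} (hM : ∀ k ∈ s, M k c = 0) (i : ι) :
    (P * M) i c = M i c := by
  calc (P * M) i c = ((1 : Matrix ι ι R) * M) i c := by
        simp only [mul_apply]
        refine Finset.sum_congr rfl fun k _ => ?_
        by_cases hk : k ∈ s
        · rw [hM k hk, mul_zero, mul_zero]
        · rw [hP i k (Or.inr hk)]
    _ = M i c := by rw [Matrix.one_mul]

end

def blockSubmonoid (s : Set ι) : Submonoid (Matrix ι ι R) where
  carrier := {P | ∀ i k, (i ∉ s ∨ k ∉ s) → P i k = (1 : Matrix ι ι R) i k}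
  one_mem' _ _ _ := rfl
  mul_mem' {P Q} hP hQ i k h := by
    rcases h with hi | hk
    · rw [mul_apply_of_notMem hP hi, hQ i k (Or.inl hi)]
    · rw [mul_apply_of_forall_mem_eq_zero hP (fun l hl => ?_), hQ i k (Or.inr hk)]
      rw [hQ l k (Or.inr hk), one_apply_ne (by rintro rfl; exact hk hl)]

end Semiring

section CommRing

variable {R : Type*} [CommRing R]

theorem transvection_mem_blockSubmonoid {s : Set ι} {a b : ι} (ha : a ∈ s) (hb : b ∈ s)
    (f : R) : transvection a b f ∈ blockSubmonoid s := by
  intro i k h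
  have : ¬(a = i ∧ b = k) := by rintro ⟨rfl, rfl⟩; tauto
  simp [transvection, single_apply_of_ne (h := this)]

theorem apply_dvd_det_of_col_eq_zero {M : Matrix ι ι R} {j : ι} (h : ∀ i ≠ j, M i j = 0) :
    M j j ∣ M.det := by
  have hjj := congrFun (congrFun (adjugate_mul M) j) j
  rw [mul_apply, Finset.sum_eq_single j (fun i _ hij => by rw [h i hij, mul_zero])
    (fun hj => absurd (Finset.mem_univ j) hj), smul_apply, one_apply_eq, smul_eq_mul,
    mul_one] at hjj
  exact Dvd.intro_left _ hjj

end CommRing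

end Matrix

theorem exists_natDegree_add_mul_lt {F : Type*} [Field F] {p q : F[X]} (hp : p.eval 0 ≠ 0)
    (hq : q.eval 0 = 0) (hq0 : q ≠ 0) :
    (∃ f : F[X], f.eval 0 = 0 ∧ (q + f * p).natDegree < q.natDegree) ∨
      ∃ g : F[X], (p + g * q).natDegree < p.natDegree := by
  rcases lt_or_ge p.natDegree q.natDegree with hpq | hqp
  · left
    obtain ⟨g, rfl⟩ : X ∣ q := X_dvd_iff.2 (by rwa [coeff_zero_eq_eval_zero])
    refine ⟨-(X * (g / p)), by simp, ?_⟩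
    rw [show X * g + -(X * (g / p)) * p = X * (g % p) by
      rw [EuclideanDomain.mod_eq_sub_mul_div]; ring]
    by_cases hr : g % p = 0
    · rw [hr, mul_zero, natDegree_zero]
      omega
    · have hp0 : p ≠ 0 := by rintro rfl; simp at hp
      have := natDegree_lt_natDegree hr (degree_mod_lt g hp0)
      rw [natDegree_X_mul hr]
      omega
  · right
    have hq1 : q.natDegree ≠ 0 := fun h => hq0 <| by
      rw [eq_C_of_natDegree_eq_zero h] at hq ⊢
      simpa using hq
    refine ⟨-(p / q), ?_⟩
    rw [show p + -(p / q) * q = p % q by rw [EuclideanDomain.mod_eq_sub_mul_div]; ring]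
    exact (natDegree_mod_lt p hq1).trans_le hqp

section InM

variable {F : Type*} [Field F] {n : ℕ} {M N : Matrix (Fin n) (Fin n) F[X]}

theorem inM_iff_isUpperTriangular : InM M ↔ (M.map (evalRingHom 0)).IsUpperTriangular :=
  ⟨fun h _ _ hij => h _ _ hij, fun h _ _ hab => h hab⟩

theorem InM.mul (hM : InM M) (hN : InM N) : InM (M * N) := by
  rw [inM_iff_isUpperTriangular, Matrix.map_mul] at *
  exact hM.mul hN

theorem InM.eval_diag_ne_zero (hM : InM M) (hdet : IsUnit M.det) (a : Fin n) :
    (M a a).eval 0 ≠ 0 := by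
  have h := (hdet.map (evalRingHom (0 : F))).ne_zero
  rw [RingHom.map_det, RingHom.mapMatrix_apply,
    det_of_isUpperTriangular (inM_iff_isUpperTriangular.1 hM)] at h
  exact Finset.prod_ne_zero_iff.1 h a (Finset.mem_univ a)

theorem inM_transvection {a b : Fin n} {f : F[X]} (hf : b < a → f.eval 0 = 0) :
    InM (transvection a b f) := by
  intro x y hyx
  by_cases h : a = x ∧ b = y
  · obtain ⟨rfl, rfl⟩ := h
    simp [transvection, one_apply_ne hyx.ne', hf hyx]
  · simp [transvection, one_apply_ne hyx.ne', single_apply_of_ne (h := h)]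

theorem IsElemUnit.inM (h : IsElemUnit M) : InM M := by
  rcases h with ⟨a, α, -, rfl⟩ | ⟨a, b, N, α, hab, rfl⟩ | ⟨a, b, N, α, -, hN, rfl⟩
  · exact inM_transvection (a := a) (b := a) fun h => absurd h (lt_irrefl a)
  · exact inM_transvection fun h => absurd h hab.not_gt
  · exact inM_transvection fun _ => by simp [hN.ne']

end InM

section elemSubmonoid

variable {F : Type*} [Field F] {n : ℕ} {E P M : Matrix (Fin n) (Fin n) F[X]}

variable (F n) in
noncomputable def elemSubmonoid : Submonoid (Matrix (Fin n) (Fin n) F[X]) :=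
  Submonoid.closure {E | IsElemUnit E}

theorem IsElemUnit.mem_elemSubmonoid (h : IsElemUnit E) : E ∈ elemSubmonoid F n :=
  Submonoid.subset_closure h

theorem inM_of_mem_elemSubmonoid (hP : P ∈ elemSubmonoid F n) : InM P :=
  Submonoid.closure_induction (fun _ hE => hE.inM)
    (fun _ _ hyx => by simp [one_apply_ne hyx.ne']) (fun _ _ _ _ => InM.mul) hP

theorem isElemUnit_transvection_monomial {a b : Fin n} {i : ℕ} (c : F)
    (h : a < b ∨ b < a ∧ 0 < i) : IsElemUnit (transvection a b (monomial i c)) := by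
  rw [← C_mul_X_pow_eq_monomial, mul_comm]
  rcases h with h | ⟨h, hi⟩
  · exact Or.inr (Or.inl ⟨a, b, i, c, h, rfl⟩)
  · exact Or.inr (Or.inr ⟨a, b, i, c, h, hi, rfl⟩)

/-- Expand `f` into monomials: below the diagonal they all have positive degree. -/
theorem transvection_mem_elemSubmonoid {a b : Fin n} (hab : a ≠ b) {f : F[X]}
    (hf : b < a → f.eval 0 = 0) : transvection a b f ∈ elemSubmonoid F n := by
  rw [f.as_sum_support]
  refine Finset.sum_induction _ (fun g => transvection a b g ∈ elemSubmonoid F n)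
    (fun g h hg hh => ?_) (by simp) fun i hi => ?_
  · rw [← transvection_mul_transvection_same a b hab]
    exact mul_mem hg hh
  · refine (isElemUnit_transvection_monomial _ ?_).mem_elemSubmonoid
    refine hab.lt_or_gt.imp_right fun hba => ⟨hba, Nat.pos_of_ne_zero ?_⟩
    rintro rfl
    exact mem_support_iff.1 hi (by rw [coeff_zero_eq_eval_zero, hf hba])

theorem transvection_neg_mul_self {a b : Fin n} (hab : a ≠ b) (f : F[X]) :
    transvection a b (-f) * transvection a b f = 1 := by
  rw [transvection_mul_transvection_same a b hab, neg_add_cancel, transvection_zero]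

theorem IsElemUnit.exists_mul_eq_one (h : IsElemUnit E) :
    ∃ E' ∈ elemSubmonoid F n, E' * E = 1 := by
  rcases h with ⟨a, α, hα, rfl⟩ | ⟨a, b, N, α, hab, rfl⟩ | ⟨a, b, N, α, hba, hN, rfl⟩
  · refine ⟨_, IsElemUnit.mem_elemSubmonoid (Or.inl ⟨a, α⁻¹, inv_ne_zero hα, rfl⟩), ?_⟩
    have hC : C α⁻¹ * C α = 1 := by rw [← C_mul, inv_mul_cancel₀ hα, C_1]
    rw [Matrix.add_mul, Matrix.one_mul, Matrix.mul_add, Matrix.mul_one, single_mul_single_same,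
      add_assoc, ← single_add, ← single_add,
      show C α - 1 + (C α⁻¹ - 1 + (C α⁻¹ - 1) * (C α - 1)) = C α⁻¹ * C α - 1 by ring, hC,
      sub_self, single_zero, add_zero]
  · exact ⟨_, transvection_mem_elemSubmonoid hab.ne (fun h => absurd h hab.not_gt),
      transvection_neg_mul_self hab.ne _⟩
  · exact ⟨_, transvection_mem_elemSubmonoid hba.ne' (fun _ => by simp [hN.ne']),
      transvection_neg_mul_self hba.ne' _⟩

theorem exists_mul_eq_one_of_mem_elemSubmonoid (hP : P ∈ elemSubmonoid F n) :
    ∃ P' ∈ elemSubmonoid F n, P' * P = 1 := by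
  induction hP using Submonoid.closure_induction with
  | mem E hE => exact hE.exists_mul_eq_one
  | one => exact ⟨1, one_mem _, Matrix.mul_one 1⟩
  | mul P Q _ _ hP hQ =>
    obtain ⟨P', hP', hPP'⟩ := hP
    obtain ⟨Q', hQ', hQQ'⟩ := hQ
    refine ⟨Q' * P', mul_mem hQ' hP', ?_⟩
    rw [Matrix.mul_assoc, ← Matrix.mul_assoc P', hPP', Matrix.one_mul, hQQ']

theorem isUnit_det_of_mem_elemSubmonoid (hP : P ∈ elemSubmonoid F n) : IsUnit P.det := by
  obtain ⟨P', -, h⟩ := exists_mul_eq_one_of_mem_elemSubmonoid hP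
  exact IsUnit.of_mul_eq_one_right _ (by rw [← det_mul, h, det_one])

theorem mem_of_mul_mem_left (hP : P ∈ elemSubmonoid F n) (h : P * M ∈ elemSubmonoid F n) :
    M ∈ elemSubmonoid F n := by
  obtain ⟨P', hP', hP'P⟩ := exists_mul_eq_one_of_mem_elemSubmonoid hP
  simpa [← Matrix.mul_assoc, hP'P] using mul_mem hP' h

theorem mem_of_mul_mem_right (hP : P ∈ elemSubmonoid F n) (h : M * P ∈ elemSubmonoid F n) :
    M ∈ elemSubmonoid F n := by
  obtain ⟨P', hP', hP'P⟩ := exists_mul_eq_one_of_mem_elemSubmonoid hP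
  simpa [Matrix.mul_assoc, mul_eq_one_comm.1 hP'P] using mul_mem h hP'

end elemSubmonoid

section reduction

variable {F : Type*} [Field F] {n : ℕ}

theorem exists_mem_mul_apply_eq_zero {j a : Fin n} (hja : j < a) (M : Matrix (Fin n) (Fin n) F[X])
    (hp : (M j j).eval 0 ≠ 0) (hq : (M a j).eval 0 = 0) :
    ∃ P ∈ elemSubmonoid F n ⊓ blockSubmonoid {j, a}, (P * M) a j = 0 := by
  induction hd : (M j j).natDegree + (M a j).natDegree using Nat.strong_induction_on
    generalizing M with
  | _ d ih =>
  by_cases hq0 : M a j = 0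
  · exact ⟨1, one_mem _, by simp [hq0]⟩
  have reduce : ∀ T ∈ elemSubmonoid F n ⊓ blockSubmonoid {j, a},
      ((T * M) j j).natDegree + ((T * M) a j).natDegree < d →
      ((T * M) j j).eval 0 ≠ 0 → ((T * M) a j).eval 0 = 0 →
      ∃ P ∈ elemSubmonoid F n ⊓ blockSubmonoid {j, a}, (P * M) a j = 0 := by
    intro T hT hlt hp' hq'
    obtain ⟨P, hP, hPM⟩ := ih _ hlt (T * M) hp' hq' rfl
    exact ⟨P * T, mul_mem hP hT, by rwa [Matrix.mul_assoc]⟩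
  rcases exists_natDegree_add_mul_lt hp hq hq0 with ⟨f, hf, hlt⟩ | ⟨g, hlt⟩
  · refine reduce (transvection a j f) ⟨transvection_mem_elemSubmonoid hja.ne' fun _ => hf,
      transvection_mem_blockSubmonoid (by simp) (by simp) f⟩ ?_ ?_ ?_ <;>
    simp [transvection_mul_apply_of_ne _ _ _ _ hja.ne, hp, hq, hf]
    omega
  · refine reduce (transvection j a g) ⟨transvection_mem_elemSubmonoid hja.ne
      fun h => absurd h hja.not_gt, transvection_mem_blockSubmonoid (by simp) (by simp) g⟩
      ?_ ?_ ?_ <;>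
    simp [transvection_mul_apply_of_ne _ _ _ _ hja.ne', hp, hq]
    omega

variable {M : Matrix (Fin n) (Fin n) F[X]}

def ColumnsReduced (j : ℕ) (M : Matrix (Fin n) (Fin n) F[X]) : Prop :=
  InM M ∧ IsUnit M.det ∧ ∀ i c : Fin n, (c : ℕ) < j → M i c = (1 : Matrix (Fin n) (Fin n) F[X]) i c

theorem ColumnsReduced.exists_apply_eq_zero {j a : Fin n} (haj : a ≠ j) (hM : ColumnsReduced j M) :
    ∃ M', ColumnsReduced j M' ∧ (M' ∈ elemSubmonoid F n → M ∈ elemSubmonoid F n) ∧ M' a j = 0 ∧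
      ∀ i, i ≠ a → i ≠ j → M' i j = M i j := by
  obtain ⟨hInM, hdet, hcols⟩ := hM
  rcases haj.lt_or_gt with haj | hja
  · have hT := transvection_mem_elemSubmonoid haj.ne (f := -M a j) fun h => absurd h haj.not_gt
    refine ⟨M * transvection a j (-M a j), ⟨hInM.mul (inM_of_mem_elemSubmonoid hT),
      by rw [det_mul]; exact hdet.mul (isUnit_det_of_mem_elemSubmonoid hT), fun i c hc => ?_⟩,
      mem_of_mul_mem_right hT, ?_, fun i hia _ => ?_⟩
    · rw [mul_transvection_apply_of_ne _ _ _ _ (Fin.ne_of_lt hc), hcols i c hc]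
    · rw [mul_transvection_apply_same, hcols a a haj, one_apply_eq]
      ring
    · rw [mul_transvection_apply_same, hcols i a haj, one_apply_ne hia]
      ring
  · obtain ⟨P, ⟨hPG, hPB⟩, hPM⟩ :=
      exists_mem_mul_apply_eq_zero hja M (hInM.eval_diag_ne_zero hdet j) (hInM a j hja)
    refine ⟨P * M, ⟨(inM_of_mem_elemSubmonoid hPG).mul hInM,
      by rw [det_mul]; exact (isUnit_det_of_mem_elemSubmonoid hPG).mul hdet, fun i c hc => ?_⟩,
      mem_of_mul_mem_left hPG, hPM, fun i hia hij => mul_apply_of_notMem hPB (by simp [hia, hij]) j⟩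
    rw [mul_apply_of_forall_mem_eq_zero hPB (fun k hk => ?_) i, hcols i c hc]
    have hkc : k ≠ c := by
      rcases hk with rfl | rfl
      · exact (Fin.ne_of_lt hc).symm
      · exact (Fin.ne_of_lt (lt_trans hc hja)).symm
    rw [hcols k c hc, one_apply_ne hkc]

theorem ColumnsReduced.mem_of_forall_col_eq_zero {j : Fin n}
    (h : ∀ M', ColumnsReduced j M' → (∀ i ≠ j, M' i j = 0) → M' ∈ elemSubmonoid F n)
    (hM : ColumnsReduced j M) : M ∈ elemSubmonoid F n := by
  suffices ∀ (t : Finset (Fin n)) (M : Matrix (Fin n) (Fin n) F[X]), ColumnsReduced j M →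
      (∀ i ∉ t, i ≠ j → M i j = 0) → M ∈ elemSubmonoid F n from
    this Finset.univ M hM fun i hi => absurd (Finset.mem_univ i) hi
  intro t
  induction t using Finset.induction_on with
  | empty => exact fun M hM hcol => h M hM fun i hij => hcol i (Finset.notMem_empty i) hij
  | insert a t _ ih =>
    intro M hM hcol
    by_cases haj : a = j
    · subst haj
      exact ih M hM fun i hi hij => hcol i (by simp [hi, hij]) hij
    obtain ⟨M', hM', hmem, hM'a, hM'i⟩ := hM.exists_apply_eq_zero haj
    refine hmem (ih M' hM' fun i hi hij => ?_)
    by_cases hia : i = a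
    · rw [hia, hM'a]
    · rw [hM'i i hia hij, hcol i (by simp [hi, hia]) hij]

theorem ColumnsReduced.mem_of_col_eq_zero {j : Fin n} (hM : ColumnsReduced j M)
    (hcol : ∀ i ≠ j, M i j = 0) (ih : ∀ M', ColumnsReduced (j + 1) M' → M' ∈ elemSubmonoid F n) :
    M ∈ elemSubmonoid F n := by
  obtain ⟨hInM, hdet, hcols⟩ := hM
  obtain ⟨α, hα, hCα⟩ := Polynomial.isUnit_iff.1
    (isUnit_of_dvd_unit (apply_dvd_det_of_col_eq_zero hcol) hdet)
  have hD : transvection j j (C α⁻¹ - 1) ∈ elemSubmonoid F n :=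
    IsElemUnit.mem_elemSubmonoid (Or.inl ⟨j, α⁻¹, inv_ne_zero hα.ne_zero, rfl⟩)
  refine mem_of_mul_mem_left hD (ih _ ⟨(inM_of_mem_elemSubmonoid hD).mul hInM,
    by rw [det_mul]; exact (isUnit_det_of_mem_elemSubmonoid hD).mul hdet, fun i c hc => ?_⟩)
  by_cases hij : i = j
  · subst hij
    rw [transvection_mul_apply_same]
    rcases (Nat.lt_succ_iff.1 hc).lt_or_eq with hc | hc
    · rw [hcols i c hc, one_apply_ne (Fin.ne_of_lt hc).symm]
      ring
    · obtain rfl : c = i := Fin.ext hc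
      have hC : C α⁻¹ * C α = 1 := by rw [← C_mul, inv_mul_cancel₀ hα.ne_zero, C_1]
      rw [← hCα, one_apply_eq]
      linear_combination hC
  · rw [transvection_mul_apply_of_ne _ _ _ _ hij]
    rcases (Nat.lt_succ_iff.1 hc).lt_or_eq with hc | hc
    · exact hcols i c hc
    · obtain rfl : c = j := Fin.ext hc
      rw [hcol i hij, one_apply_ne hij]

theorem ColumnsReduced.mem_elemSubmonoid {j : ℕ} (hj : j ≤ n) (hM : ColumnsReduced j M) :
    M ∈ elemSubmonoid F n := by
  induction hj using Nat.decreasingInduction generalizing M with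
  | self =>
    obtain rfl : M = 1 := Matrix.ext fun i c => hM.2.2 i c c.isLt
    exact one_mem _
  | of_succ j hj ih =>
    exact hM.mem_of_forall_col_eq_zero (j := ⟨j, hj⟩) fun M' hM' hcol =>
      hM'.mem_of_col_eq_zero hcol fun _ => ih

end reduction

theorem unit_eq_prod_elemUnits_general {F : Type*} [Field F] {n : ℕ}
    (M : Matrix (Fin n) (Fin n) (Polynomial F)) (hM : InM M)
    (hunit : ∃ N : Matrix (Fin n) (Fin n) (Polynomial F), InM N ∧ M * N = 1 ∧ N * M = 1) :
    ∃ L : List (Matrix (Fin n) (Fin n) (Polynomial F)),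
      (∀ E ∈ L, IsElemUnit E) ∧ M = L.prod := by
  obtain ⟨N, -, hMN, -⟩ := hunit
  have hdet : IsUnit M.det := IsUnit.of_mul_eq_one N.det (by rw [← det_mul, hMN, det_one])
  have hMG : M ∈ elemSubmonoid F n :=
    ColumnsReduced.mem_elemSubmonoid (Nat.zero_le n) ⟨hM, hdet, fun _ _ h => absurd h (by simp)⟩
  obtain ⟨L, hL, rfl⟩ := Submonoid.exists_list_of_mem_closure hMG
  exact ⟨L, hL, rfl⟩

/-- Every unit of the ring `𝓜` is a finite product of elementary units
of `𝓜`. -/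
theorem unit_eq_prod_elemUnits {F : Type*} [Field F] [Fintype F] {n : ℕ} (hn : 2 ≤ n)
    (M : Matrix (Fin n) (Fin n) (Polynomial F)) (hM : InM M)
    (hunit : ∃ N : Matrix (Fin n) (Fin n) (Polynomial F), InM N ∧ M * N = 1 ∧ N * M = 1) :
    ∃ L : List (Matrix (Fin n) (Fin n) (Polynomial F)),
      (∀ E ∈ L, IsElemUnit E) ∧ M = L.prod :=
  unit_eq_prod_elemUnits_general M hM hunit
end

section
/- Let j_1,…,j_{n−1} ∈ {1,…,n} be pairwise different and let d_1,…,d_{n−1} ∈ ℕ be such that j_i < i implies d_i > 0. Then there exists a basic matrix M = (m_{ij}) ∈ F[t]^{(n−1)×n} with the following properties: (i) deg(m_{ij}) ≤ d_i for j < j_i; (ii) deg(m_{ij}) = d_i for j = j_i; (iii) deg(m_{ij}) < d_i for j > j_i; (iv) m_{ii}(0) = 1 for all i; (v) m_{ij}(0) = 0 for j < i. -/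
open Polynomial Matrix

/-- A `k × n` matrix over `F[t]` is basic if it has a right inverse over `F[t]`
(equivalently, its `k × k` minors are coprime). -/
def IsBasic {F : Type*} [Field F] {k n : ℕ}
    (G : Matrix (Fin k) (Fin n) (Polynomial F)) : Prop :=
  ∃ H : Matrix (Fin n) (Fin k) (Polynomial F), G * H = 1

/-!
Extend `j` to a permutation `π` of the columns (the last column goes to the one `j` misses), so
that row `i` sits over column `i`. The naive rows `e_i + t^{d_i} e_{π i}` (for a fixed point,
`(1 + t^{d_i}) e_i`, or `e_i` when `d_i = 0`) meet all degree and evaluation conditions, but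
every cycle of `π` that avoids the last column, except a fixed point `i` with `d_i = 0`, puts a
non-unit factor `1 ± t^D` into the minors. To break such a cycle, the row of its largest element
`x`, which has `π x ≤ x` and hence `d_x > 0`, gets an extra entry `1` in the column of the next
larger such maximum, or in the last column. These columns, together with column `i` for every
other row `i`, select a square submatrix which is unitriangular once the rows are ordered by the
largest element of their cycle and then by the number of steps needed to reach it; so it has
determinant one.
-/

open Finset

theorem Matrix.det_eq_one_of_unitriangular {m α R : Type*} [Fintype m] [DecidableEq m]
    [CommRing R] [LinearOrder α] (B : Matrix m m R) (ν : m → α) (hdiag : ∀ i, B i i = 1)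
    (hoff : ∀ i a, a ≠ i → B i a ≠ 0 → ν a < ν i) : B.det = 1 := by
  have htri : B.BlockTriangular (OrderDual.toDual ∘ ν) := fun i a hlt => by
    by_contra hne
    exact (hoff i a (fun h => (h ▸ hlt).false) hne).not_gt hlt
  have hblock : ∀ k, B.toSquareBlock (OrderDual.toDual ∘ ν) k = 1 := fun k => by
    ext ⟨i, hi⟩ ⟨a, ha⟩
    by_cases h : a = i
    · subst h; simp [toSquareBlock_def, hdiag]
    · rw [toSquareBlock_def, of_apply, one_apply_ne fun e => h (congrArg Subtype.val e).symm]
      by_contra hne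
      exact (hoff i a h hne).ne (ha.trans hi.symm)
  rw [htri.det]
  exact prod_eq_one fun k _ => by rw [hblock k, det_one]

theorem IsBasic.of_isUnit_det_submatrix {F : Type*} [Field F] {k n : ℕ}
    (M : Matrix (Fin k) (Fin n) F[X]) (p : Fin k → Fin n)
    (h : IsUnit (M.submatrix id p).det) : IsBasic M :=
  ⟨(1 : Matrix (Fin n) (Fin n) F[X]).submatrix id p * (M.submatrix id p)⁻¹, by
    rw [← Matrix.mul_assoc]
    exact (congrArg (· * _) (mul_submatrix_one (Equiv.refl _) p M)).trans (mul_nonsing_inv _ h)⟩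

namespace Equiv.Perm

variable {α : Type*} [Fintype α] [LinearOrder α] (π : Perm α)

def cycleMax (x : α) : α :=
  (univ.filter (π.SameCycle x)).max' ⟨x, by simp [SameCycle.rfl]⟩

variable {π}

theorem sameCycle_cycleMax (x : α) : π.SameCycle x (π.cycleMax x) :=
  (mem_filter.mp (max'_mem _ _)).2

theorem le_cycleMax {x y : α} (h : π.SameCycle x y) : y ≤ π.cycleMax x :=
  le_max' _ _ (by simpa using h)

theorem SameCycle.cycleMax_eq {x y : α} (h : π.SameCycle x y) :
    π.cycleMax x = π.cycleMax y := by
  have : π.SameCycle x = π.SameCycle y := funext fun z => propext ⟨h.symm.trans, h.trans⟩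
  simp only [cycleMax, this]

theorem cycleMax_apply (x : α) : π.cycleMax (π x) = π.cycleMax x :=
  (sameCycle_apply_left.mpr (SameCycle.refl π x)).cycleMax_eq

theorem cycleMax_eq_self_of_apply_eq_self {x : α} (h : π x = x) : π.cycleMax x = x :=
  ((sameCycle_cycleMax x).eq_of_left h).symm

theorem exists_pow_succ_apply_eq_cycleMax (x : α) : ∃ k, (π ^ (k + 1)) x = π.cycleMax x := by
  obtain ⟨k, hk, -, h⟩ := (sameCycle_cycleMax (π := π) x).exists_pow_eq''
  exact ⟨k - 1, by rwa [Nat.sub_add_cancel hk]⟩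

variable (π)

def stepsToMax (x : α) : ℕ := Nat.find (exists_pow_succ_apply_eq_cycleMax (π := π) x)

variable {π}

theorem stepsToMax_apply_lt {x : α} (h : π x ≠ π.cycleMax x) :
    π.stepsToMax (π x) < π.stepsToMax x := by
  have hspec := Nat.find_spec (exists_pow_succ_apply_eq_cycleMax (π := π) x)
  obtain ⟨k, hk⟩ : ∃ k, π.stepsToMax x = k + 1 := by
    refine Nat.exists_eq_succ_of_ne_zero fun h0 => h ?_
    rw [stepsToMax] at h0
    simpa [h0] using hspec
  have : (π ^ (k + 1)) (π x) = π.cycleMax (π x) := by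
    rw [cycleMax_apply, ← mul_apply, ← pow_succ, ← hk]
    exact hspec
  exact hk ▸ Nat.lt_succ_of_le (Nat.find_le this)

end Equiv.Perm

theorem Fin.exists_perm_castSucc_eq {m : ℕ} {j : Fin m → Fin (m + 1)}
    (hj : Function.Injective j) :
    ∃ π : Equiv.Perm (Fin (m + 1)), ∀ i, π i.castSucc = j i := by
  obtain ⟨c, hc⟩ : ∃ c, c ∉ Set.range j := by
    by_contra! h
    simpa using Fintype.card_le_of_surjective j h
  have hinj : Function.Injective (Fin.snoc (α := fun _ => Fin (m + 1)) j c) :=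
    Fin.snoc_injective_iff.mpr ⟨hj, hc⟩
  exact ⟨Equiv.ofBijective _ (Finite.injective_iff_bijective.mp hinj), fun i => by simp⟩

namespace DegreeMatrix

open Equiv Perm

noncomputable section

variable {m : ℕ} (π : Perm (Fin (m + 1))) (d : Fin m → ℕ)

def IsTrivialRow (i : Fin m) : Prop := π i.castSucc = i.castSucc ∧ d i = 0

def IsRerouted (i : Fin m) : Prop :=
  π.cycleMax i.castSucc = i.castSucc ∧ ¬IsTrivialRow π d i

open Classical in
def targets : Finset (Fin (m + 1)) :=
  insert (Fin.last m) ((univ.filter (IsRerouted π d)).map Fin.castSuccEmb)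

open Classical in
def nextTarget (i : Fin m) : Fin (m + 1) :=
  ((targets π d).filter (i.castSucc < ·)).min'
    ⟨Fin.last m, by simp [targets, Fin.castSucc_lt_last]⟩

open Classical in
def pivot (i : Fin m) : Fin (m + 1) := if IsRerouted π d i then nextTarget π d i else i.castSucc

open Classical in
def degreeMatrix (F : Type*) [Field F] : Matrix (Fin m) (Fin (m + 1)) F[X] := fun i b =>
  (if b = i.castSucc ∧ ¬IsTrivialRow π d i then 1 else 0) +
  (if b = π i.castSucc then X ^ d i else 0) +
  (if IsRerouted π d i ∧ b = nextTarget π d i then 1 else 0)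

variable {π d}

theorem nextTarget_mem (i : Fin m) : nextTarget π d i ∈ targets π d := by
  classical exact (mem_filter.mp (min'_mem _ _)).1

theorem castSucc_lt_nextTarget (i : Fin m) : i.castSucc < nextTarget π d i := by
  classical exact (mem_filter.mp (min'_mem _ _)).2

theorem nextTarget_le {i : Fin m} {y : Fin (m + 1)} (hy : y ∈ targets π d)
    (h : i.castSucc < y) : nextTarget π d i ≤ y := by
  classical exact min'_le _ _ (mem_filter.mpr ⟨hy, h⟩)

theorem castSucc_mem_targets {i : Fin m} : i.castSucc ∈ targets π d ↔ IsRerouted π d i := by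
  classical simp [targets, Fin.castSucc_ne_last]

theorem nextTarget_injOn : Set.InjOn (nextTarget π d) {i | IsRerouted π d i} := by
  intro a ha i hi h
  by_contra hne
  rcases lt_or_gt_of_ne hne with hlt | hlt
  · exact (castSucc_lt_nextTarget i).not_ge (h ▸ nextTarget_le (castSucc_mem_targets.mpr hi) hlt)
  · exact (castSucc_lt_nextTarget a).not_ge (h ▸ nextTarget_le (castSucc_mem_targets.mpr ha) hlt)

theorem IsRerouted.apply_le {i : Fin m} (h : IsRerouted π d i) : π i.castSucc ≤ i.castSucc :=
  (le_cycleMax (sameCycle_apply_right.mpr SameCycle.rfl)).trans_eq h.1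

theorem IsRerouted.pos (hd : ∀ i, π i.castSucc < i.castSucc → 0 < d i) {i : Fin m}
    (h : IsRerouted π d i) : 0 < d i := by
  rcases h.apply_le.lt_or_eq with hlt | heq
  · exact hd i hlt
  · exact Nat.pos_of_ne_zero fun h0 => h.2 ⟨heq, h0⟩

theorem IsRerouted.apply_lt_nextTarget {i : Fin m} (h : IsRerouted π d i) :
    π i.castSucc < nextTarget π d i :=
  h.apply_le.trans_lt (castSucc_lt_nextTarget i)

variable {F : Type*} [Field F]

theorem eq_castSucc_or_of_degreeMatrix_ne_zero {i : Fin m} {b : Fin (m + 1)}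
    (h : degreeMatrix π d F i b ≠ 0) :
    b = i.castSucc ∨ b = π i.castSucc ∨ (IsRerouted π d i ∧ b = nextTarget π d i) := by
  by_contra! hb
  obtain ⟨h1, h2, h3⟩ := hb
  simp [degreeMatrix, h1, h2] at h
  exact h3 h.1 h.2

theorem degreeMatrix_pivot (i : Fin m) : degreeMatrix π d F i (pivot π d i) = 1 := by
  by_cases hr : IsRerouted π d i
  · simp [degreeMatrix, pivot, hr, (castSucc_lt_nextTarget i).ne', hr.apply_lt_nextTarget.ne']
  · have hfix : π i.castSucc = i.castSucc → IsTrivialRow π d i := fun hfix => by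
      by_contra ht
      exact hr ⟨cycleMax_eq_self_of_apply_eq_self hfix, ht⟩
    by_cases ht : IsTrivialRow π d i
    · simp [degreeMatrix, pivot, hr, ht, ht.1, ht.2]
    · simp [degreeMatrix, pivot, hr, ht, Ne.symm (mt hfix ht)]

theorem degree_degreeMatrix_le {i : Fin m} {b : Fin (m + 1)} (hb : b < π i.castSucc) :
    (degreeMatrix π d F i b).degree ≤ d i := by
  have h3 : ¬(IsRerouted π d i ∧ b = nextTarget π d i) := fun ⟨hr, e⟩ =>
    (hb.trans hr.apply_lt_nextTarget).ne e
  simp only [degreeMatrix, if_neg hb.ne, if_neg h3, add_zero]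
  split_ifs <;> simp

theorem degree_degreeMatrix_apply (i : Fin m) :
    (degreeMatrix π d F i (π i.castSucc)).degree = d i := by
  have h3 : ¬(IsRerouted π d i ∧ π i.castSucc = nextTarget π d i) := fun ⟨hr, e⟩ =>
    hr.apply_lt_nextTarget.ne e
  simp only [degreeMatrix, if_neg h3, add_zero]
  split_ifs with h1
  · have hd : d i ≠ 0 := fun h0 => h1.2 ⟨h1.1, h0⟩
    rw [degree_add_eq_right_of_degree_lt] <;> simp [Nat.pos_of_ne_zero hd]
  · simp

theorem degree_degreeMatrix_lt (hd : ∀ i, π i.castSucc < i.castSucc → 0 < d i) {i : Fin m}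
    {b : Fin (m + 1)} (hb : π i.castSucc < b) : (degreeMatrix π d F i b).degree < d i := by
  simp only [degreeMatrix, if_neg hb.ne']
  split_ifs with hdiag hre hre
  · exact absurd (hdiag.1 ▸ hre.2) (castSucc_lt_nextTarget i).ne
  · simpa using hd i (hdiag.1 ▸ hb)
  · simpa using hre.1.pos hd
  · simp

theorem eval_degreeMatrix_castSucc (i : Fin m) :
    (degreeMatrix π d F i i.castSucc).eval 0 = 1 := by
  have h3 : ¬(IsRerouted π d i ∧ i.castSucc = nextTarget π d i) := fun ⟨_, e⟩ =>
    (castSucc_lt_nextTarget i).ne e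
  by_cases ht : IsTrivialRow π d i
  · simp [degreeMatrix, h3, ht, ht.1, ht.2]
  · by_cases hfix : π i.castSucc = i.castSucc
    · have hd : d i ≠ 0 := fun h0 => ht ⟨hfix, h0⟩
      simp [degreeMatrix, h3, ht, hfix, hd]
    · simp [degreeMatrix, h3, ht, Ne.symm hfix]

theorem eval_degreeMatrix_of_lt (hd : ∀ i, π i.castSucc < i.castSucc → 0 < d i) {i : Fin m}
    {b : Fin (m + 1)} (hb : b < i.castSucc) : (degreeMatrix π d F i b).eval 0 = 0 := by
  have h3 : ¬(IsRerouted π d i ∧ b = nextTarget π d i) := fun ⟨_, e⟩ =>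
    (hb.trans (castSucc_lt_nextTarget i)).ne e
  simp only [degreeMatrix, if_neg h3, hb.ne, false_and, if_false, zero_add, add_zero]
  split_ifs with h2
  · simp [(hd i (h2 ▸ hb)).ne']
  · simp

variable (π) in
def rowRank (a : Fin m) : Fin (m + 1) ×ₗ ℕ :=
  toLex (π.cycleMax a.castSucc, π.stepsToMax a.castSucc)

theorem rowRank_lt_of_isRerouted {a i : Fin m} (ha : IsRerouted π d a)
    (h : π.SameCycle i.castSucc (nextTarget π d a)) : rowRank π a < rowRank π i :=
  Prod.Lex.toLex_lt_toLex.mpr <| Or.inl <| by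
    simpa only [ha.1] using (castSucc_lt_nextTarget a).trans_le (le_cycleMax h)

theorem rowRank_lt_of_degreeMatrix_pivot_ne_zero {a i : Fin m} (hne : a ≠ i)
    (h : degreeMatrix π d F i (pivot π d a) ≠ 0) : rowRank π a < rowRank π i := by
  by_cases ha : IsRerouted π d a
  · rw [pivot, if_pos ha] at h
    rcases eq_castSucc_or_of_degreeMatrix_ne_zero h with h | h | ⟨hi, h⟩
    · exact rowRank_lt_of_isRerouted ha (h ▸ SameCycle.rfl)
    · exact rowRank_lt_of_isRerouted ha (h ▸ sameCycle_apply_right.mpr SameCycle.rfl)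
    · exact absurd (nextTarget_injOn ha hi h) hne
  · rw [pivot, if_neg ha] at h
    rcases eq_castSucc_or_of_degreeMatrix_ne_zero h with h | h | ⟨-, h⟩
    · exact absurd (Fin.castSucc_injective _ h) hne
    · have hmax : π i.castSucc ≠ π.cycleMax i.castSucc := fun hmax => by
        have hfix : π a.castSucc = a.castSucc := by
          by_contra hfix
          refine ha ⟨?_, fun ht => hfix ht.1⟩
          rw [h, cycleMax_apply, hmax]
        rw [h, EmbeddingLike.apply_eq_iff_eq] at hfix
        exact hne (Fin.castSucc_injective _ (h.trans hfix))
      refine Prod.Lex.toLex_lt_toLex.mpr (Or.inr ⟨?_, ?_⟩)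
      · simp only [h, cycleMax_apply]
      · simpa only [h] using stepsToMax_apply_lt hmax
    · exact absurd (castSucc_mem_targets.mp (h ▸ nextTarget_mem i)) ha

theorem isBasic_degreeMatrix : IsBasic (degreeMatrix π d F) := by
  have hdet := ((degreeMatrix π d F).submatrix id (pivot π d)).det_eq_one_of_unitriangular
    (rowRank π) degreeMatrix_pivot fun _ _ hne h => rowRank_lt_of_degreeMatrix_pivot_ne_zero hne h
  exact IsBasic.of_isUnit_det_submatrix _ _ (hdet ▸ isUnit_one)

end

end DegreeMatrix

theorem exists_basic_matrix_with_degrees_general {F : Type*} [Field F] {n : ℕ}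
    (hn : 2 ≤ n) (j : Fin (n - 1) → Fin n) (hj : Function.Injective j)
    (d : Fin (n - 1) → ℕ) (hjd : ∀ i : Fin (n - 1), ((j i : ℕ) < (i : ℕ)) → 0 < d i) :
    ∃ M : Matrix (Fin (n - 1)) (Fin n) (Polynomial F), IsBasic M ∧
      (∀ (i : Fin (n - 1)) (b : Fin n), (b : ℕ) < (j i : ℕ) →
        (M i b).degree ≤ (d i : WithBot ℕ)) ∧
      (∀ i : Fin (n - 1), (M i (j i)).degree = (d i : WithBot ℕ)) ∧
      (∀ (i : Fin (n - 1)) (b : Fin n), (j i : ℕ) < (b : ℕ) →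
        (M i b).degree < (d i : WithBot ℕ)) ∧
      (∀ i : Fin (n - 1), (M i (Fin.castLE (Nat.sub_le n 1) i)).eval 0 = 1) ∧
      (∀ (i : Fin (n - 1)) (b : Fin n), (b : ℕ) < (i : ℕ) → (M i b).eval 0 = 0) := by
  obtain ⟨m, rfl⟩ : ∃ m, n = m + 1 := ⟨n - 1, by omega⟩
  obtain ⟨π, hπ⟩ := Fin.exists_perm_castSucc_eq hj
  obtain rfl : (fun i => π i.castSucc) = j := funext hπ
  open DegreeMatrix in
  exact ⟨degreeMatrix π d F, isBasic_degreeMatrix, fun i b hb => degree_degreeMatrix_le hb,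
    degree_degreeMatrix_apply, fun i b hb => degree_degreeMatrix_lt hjd hb,
    eval_degreeMatrix_castSucc, fun i b hb => eval_degreeMatrix_of_lt hjd hb⟩

/-- Given pairwise different columns `j_1,…,j_{n−1} ∈ {1,…,n}` and
degrees `d_1,…,d_{n−1} ∈ ℕ` with `j_i < i → d_i > 0`, there is a basic matrix
`M ∈ F[t]^{(n−1)×n}` such that: (i) `deg m_{ij} ≤ d_i` for `j < j_i`;
(ii) `deg m_{i,j_i} = d_i`; (iii) `deg m_{ij} < d_i` for `j > j_i`;
(iv) `m_{ii}(0) = 1` for all `i`; (v) `m_{ij}(0) = 0` for `j < i`. -/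
theorem exists_basic_matrix_with_degrees {F : Type*} [Field F] [Fintype F] {n : ℕ}
    (hn : 2 ≤ n) (j : Fin (n - 1) → Fin n) (hj : Function.Injective j)
    (d : Fin (n - 1) → ℕ) (hjd : ∀ i : Fin (n - 1), ((j i : ℕ) < (i : ℕ)) → 0 < d i) :
    ∃ M : Matrix (Fin (n - 1)) (Fin n) (Polynomial F), IsBasic M ∧
      (∀ (i : Fin (n - 1)) (b : Fin n), (b : ℕ) < (j i : ℕ) →
        (M i b).degree ≤ (d i : WithBot ℕ)) ∧
      (∀ i : Fin (n - 1), (M i (j i)).degree = (d i : WithBot ℕ)) ∧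
      (∀ (i : Fin (n - 1)) (b : Fin n), (j i : ℕ) < (b : ℕ) →
        (M i b).degree < (d i : WithBot ℕ)) ∧
      (∀ i : Fin (n - 1), (M i (Fin.castLE (Nat.sub_le n 1) i)).eval 0 = 1) ∧
      (∀ (i : Fin (n - 1)) (b : Fin n), (b : ℕ) < (i : ℕ) → (M i b).eval 0 = 0) :=
  exists_basic_matrix_with_degrees_general hn j hj d hjd
end

section
/- Let 1 ≤ k ≤ n−1 and ν_1,…,ν_k ∈ ℕ. Suppose there exist pairwise different indices i_1,…,i_k ∈ {1,…,n−1} and pairwise different indices j_1,…,j_k ∈ {1,…,n} such that j_l − i_l ≡ ν_l (mod n) for all l = 1,…,k. Then there exists a delay-free, semi-reduced matrix M ∈ 𝓜 with Supp(M) = {i_1,…,i_k}, such that the matrix formed by the nonzero rows of M is basic, and such that max_{1≤b≤n} 𝒟(M)_{i_l, b} = ν_l for all l = 1,…,k. -/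
/-!
Write `n D_l + j_l = ν_l + i_l`. Row `i_l` of `M` carries `t ^ D_l` in column `j_l`, a `1` on
the diagonal, and one more monomial in a pivot column `ψ_l` whose entry of `𝒟(M)` stays below
`ν_l`; so every row maximum is `ν_l`, attained only in column `j_l`, and the `j_l` are distinct.
The `k × k` minor on the columns `i_l` is unitriangular at `t = 0`. The pivots are chosen one row
at a time, each in a column that no remaining row uses (such a row and column exist because
`k < n`), which makes the minor on the pivot columns triangular with monomial diagonal, hence a
power of `t`. The two minors are coprime, and their adjugates combine to a right inverse.
-/

open Polynomial Matrix

namespace Matrix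

variable {m R : Type*} [Fintype m] [DecidableEq m] [CommRing R]

theorem det_eq_prod_diag_of_blockTriangular {α : Type*} [LinearOrder α] {M : Matrix m m R}
    {b : m → α} (hM : M.BlockTriangular b) (hb : Function.Injective b) :
    M.det = ∏ i, M i i :=
  let _ : LinearOrder m := LinearOrder.lift' b hb
  det_of_isUpperTriangular hM

theorem exists_mul_eq_one_of_isCoprime_det {n : Type*} [Fintype n] [DecidableEq n]
    (G : Matrix m n R) (p q : m → n)
    (h : IsCoprime (G.submatrix id p).det (G.submatrix id q).det) :
    ∃ H : Matrix n m R, G * H = 1 := by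
  obtain ⟨u, v, huv⟩ := h
  refine ⟨u • ((1 : Matrix n n R).submatrix (Equiv.refl n) p * (G.submatrix id p).adjugate) +
    v • ((1 : Matrix n n R).submatrix (Equiv.refl n) q * (G.submatrix id q).adjugate), ?_⟩
  rw [Matrix.mul_add, Matrix.mul_smul, Matrix.mul_smul, ← Matrix.mul_assoc, ← Matrix.mul_assoc,
    mul_submatrix_one, mul_submatrix_one]
  simp only [Equiv.refl_symm, Equiv.coe_refl, Function.id_comp, mul_adjugate, smul_smul,
    ← add_smul, huv, one_smul]

end Matrix

theorem Polynomial.isCoprime_X_pow_of_eval_zero_ne_zero {K : Type*} [Field K] {f : K[X]}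
    (hf : f.eval 0 ≠ 0) (N : ℕ) : IsCoprime f (X ^ N) :=
  irreducible_X.coprime_pow_of_not_dvd N (by rwa [X_dvd_iff, coeff_zero_eq_eval_zero])

/-- Candidate pivot columns of a row with diagonal column `I` and leading entry `X ^ D` in
column `J`: the column `J` unless a self-loop `I = J` turns that entry into `X ^ D + 1`, the
column `I`, and the columns where a monomial `1` (right of the diagonal) or `X` (left of it) stays
strictly below the row maximum `n * D + J - I` of the degree matrix. -/
def PivotWindow (n I J D c : ℕ) : Prop :=
  (c = J ∧ (I = J → D = 0)) ∨ (c = I ∧ I ≠ J) ∨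
    (I < c ∧ c ≠ J ∧ c < n ∧ c < n * D + J) ∨ (c < I ∧ c ≠ J ∧ c + n < n * D + J)

section PivotWindow

variable {n I J D c : ℕ}

theorem lt_of_lt_of_not_pivotWindow (hc : ¬PivotWindow n I J D c) (hcJ : c ≠ J) (hcn : c < n)
    (hIc : I < c) : J < c := by
  rcases Nat.eq_zero_or_pos D with rfl | hD
  · simp only [PivotWindow] at hc
    omega
  · have : n ≤ n * D := Nat.le_mul_of_pos_right n hD
    simp only [PivotWindow] at hc
    omega

theorem mem_Ioo_of_not_pivotWindow (hc : ¬PivotWindow n I J D c) (hcI : c ≠ I) (hcJ : c ≠ J)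
    (hcn : c < n) (hD : D ≠ 0) : J < c ∧ c < I := by
  have : n ≤ n * D := Nat.le_mul_of_pos_right n (Nat.pos_of_ne_zero hD)
  simp only [PivotWindow] at hc
  omega

end PivotWindow

section Pivots

open Finset

variable {ι : Type*} {s : Finset ι} {I J : ι → ℕ}

theorem filter_lt_eq_of_image_subset (hI : Set.InjOn I s) (hJ : Set.InjOn J s)
    (himg : s.image J ⊆ s.image I) {c : ℕ} (hlt : ∀ u ∈ s, I u < c → J u < c) :
    s.filter (fun u => J u < c) = s.filter (fun u => I u < c) := by
  refine (eq_of_subset_of_card_le (fun u hu => ?_) ?_).symm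
  · rw [mem_filter] at hu ⊢
    exact ⟨hu.1, hlt u hu.1 hu.2⟩
  · have := card_le_card (filter_subset_filter (· < c) himg)
    rwa [filter_image, filter_image, card_image_of_injOn (hJ.mono (filter_subset _ s)),
      card_image_of_injOn (hI.mono (filter_subset _ s))] at this

theorem not_forall_lt_of_image_subset (hs : s.Nonempty) (himg : s.image J ⊆ s.image I) :
    ¬∀ u ∈ s, I u < J u := by
  intro hlt
  obtain ⟨u, hu, hmax⟩ := exists_max_image s J hs
  obtain ⟨w, hw, hwu⟩ := mem_image.1 (himg (mem_image_of_mem J hu))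
  exact absurd (hmax w hw) (not_le.2 (hwu ▸ hlt w hw))

variable {n : ℕ} {D : ι → ℕ}

/-- If no window contained `c`, no row could cross `c` downwards (count the rows on either side
of `c`), so every row would go upwards, which `J(s) ⊆ I(s)` forbids. -/
theorem exists_pivotWindow_of_notMem_image (hI : Function.Injective I)
    (hJ : Function.Injective J) (hs : s.Nonempty) (himg : s.image J ⊆ s.image I)
    (hup : ∀ u ∈ s, D u = 0 → I u < J u) {c : ℕ} (hcn : c < n) (hcI : c ∉ s.image I) :
    ∃ u ∈ s, PivotWindow n (I u) (J u) (D u) c := by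
  by_contra! hcW
  have hcJ : c ∉ s.image J := fun h => hcI (himg h)
  have hfilter := filter_lt_eq_of_image_subset hI.injOn hJ.injOn himg fun u hu =>
    lt_of_lt_of_not_pivotWindow (hcW u hu) (fun h => hcJ (h ▸ mem_image_of_mem J hu)) hcn
  refine not_forall_lt_of_image_subset hs himg fun u hu => hup u hu (by_contra fun hD0 => ?_)
  obtain ⟨hJc, hcIu⟩ := mem_Ioo_of_not_pivotWindow (hcW u hu)
    (fun h => hcI (h ▸ mem_image_of_mem I hu)) (fun h => hcJ (h ▸ mem_image_of_mem J hu)) hcn hD0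
  have hmem : u ∈ s.filter (fun u => J u < c) := mem_filter.2 ⟨hu, hJc⟩
  rw [hfilter, mem_filter] at hmem
  omega

theorem exists_free_pivot (hI : Function.Injective I) (hJ : Function.Injective J)
    (hD : ∀ u, J u < I u → D u ≠ 0) (hs : s.Nonempty) {C : Finset ℕ} (hCn : ∀ c ∈ C, c < n)
    (hJC : s.image J ⊆ C) (hcard : #s < #C) :
    ∃ u ∈ s, ∃ c ∈ C, PivotWindow n (I u) (J u) (D u) c ∧
      ∀ w ∈ s, w ≠ u → c ≠ I w ∧ c ≠ J w := by
  by_contra hfree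
  have taken : ∀ u ∈ s, ∀ c ∈ C, PivotWindow n (I u) (J u) (D u) c →
      ∃ w ∈ s, w ≠ u ∧ (c = I w ∨ c = J w) := by
    intro u hu c hc hW
    by_contra h
    push Not at h
    exact hfree ⟨u, hu, c, hc, hW, h⟩
  have hsucc : ∀ u ∈ s, (I u = J u → D u = 0) → ∃ w ∈ s, w ≠ u ∧ I w = J u := by
    intro u hu h
    obtain ⟨w, hw, hwu, hc | hc⟩ :=
      taken u hu (J u) (hJC (mem_image_of_mem J hu)) (Or.inl ⟨rfl, h⟩)
    · exact ⟨w, hw, hwu, hc.symm⟩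
    · exact absurd (hJ hc).symm hwu
  have himg : s.image J ⊆ s.image I := by
    intro c hc
    obtain ⟨u, hu, rfl⟩ := mem_image.1 hc
    by_cases h : I u = J u ∧ D u ≠ 0
    · exact mem_image.2 ⟨u, hu, h.1⟩
    · obtain ⟨w, hw, -, hwu⟩ := hsucc u hu fun hIJ => by_contra fun hD0 => h ⟨hIJ, hD0⟩
      exact mem_image.2 ⟨w, hw, hwu⟩
  have hup : ∀ u ∈ s, D u = 0 → I u < J u := by
    intro u hu h0
    obtain ⟨w, -, hwu, hIw⟩ := hsucc u hu fun _ => h0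
    have hne : I u ≠ J u := fun h => hwu (hI (hIw.trans h.symm))
    have := hD u
    omega
  obtain ⟨c, hcC, hcI⟩ : ∃ c ∈ C, c ∉ s.image I := by
    by_contra! h
    have := (card_le_card h).trans card_image_le
    omega
  obtain ⟨u, hu, hW⟩ := exists_pivotWindow_of_notMem_image hI hJ hs himg hup (hCn c hcC) hcI
  obtain ⟨w, hw, -, h | h⟩ := taken u hu c hcC hW
  · exact hcI (mem_image.2 ⟨w, hw, h.symm⟩)
  · exact hcI (himg (mem_image.2 ⟨w, hw, h.symm⟩))

theorem exists_pivots [DecidableEq ι] (hI : Function.Injective I) (hJ : Function.Injective J)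
    (hD : ∀ u, J u < I u → D u ≠ 0) (s : Finset ι) (C : Finset ℕ) (hCn : ∀ c ∈ C, c < n)
    (hJC : s.image J ⊆ C) (hcard : #s < #C) :
    ∃ ψ key : ι → ℕ, (∀ l ∈ s, ψ l ∈ C ∧ PivotWindow n (I l) (J l) (D l) (ψ l)) ∧
      Set.InjOn key s ∧
      ∀ l ∈ s, ∀ l' ∈ s, key l' < key l → ψ l' ≠ I l ∧ ψ l' ≠ J l ∧ ψ l' ≠ ψ l := by
  induction s using Finset.strongInduction generalizing C with
  | H s ih =>
  rcases s.eq_empty_or_nonempty with rfl | hs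
  · exact ⟨0, 0, by simp, by simp, by simp⟩
  obtain ⟨u, hu, c, hcC, hW, hfree⟩ := exists_free_pivot hI hJ hD hs hCn hJC hcard
  have hJC' : (s.erase u).image J ⊆ C.erase c := by
    intro x hx
    obtain ⟨l, hl, rfl⟩ := mem_image.1 hx
    exact mem_erase.2 ⟨(hfree l (mem_of_mem_erase hl) (ne_of_mem_erase hl)).2.symm,
      hJC (mem_image_of_mem J (mem_of_mem_erase hl))⟩
  obtain ⟨ψ, key, hψ, hkey, htri⟩ := ih (s.erase u) (erase_ssubset hu) (C.erase c)
    (fun x hx => hCn x (mem_of_mem_erase hx)) hJC'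
    (by have := hs.card_pos; rw [card_erase_of_mem hu, card_erase_of_mem hcC]; omega)
  refine ⟨Function.update ψ u c, fun l => if l = u then 0 else key l + 1, ?_, ?_, ?_⟩
  · intro l hl
    by_cases hlu : l = u
    · subst hlu
      simpa using ⟨hcC, hW⟩
    · obtain ⟨hψC, hψW⟩ := hψ l (mem_erase.2 ⟨hlu, hl⟩)
      simpa [hlu] using ⟨mem_of_mem_erase hψC, hψW⟩
  · intro l hl l' hl' h
    by_cases hlu : l = u <;> by_cases hl'u : l' = u <;>
      simp only [hlu, hl'u, if_true, if_false] at h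
    · rw [hlu, hl'u]
    · omega
    · omega
    · exact hkey (mem_erase.2 ⟨hlu, hl⟩) (mem_erase.2 ⟨hl'u, hl'⟩) (by omega)
  · intro l hl l' hl' h
    by_cases hlu : l = u
    · simp [hlu] at h
    by_cases hl'u : l' = u
    · subst hl'u
      simp only [Function.update_self, Function.update_of_ne hlu]
      exact ⟨(hfree l hl hlu).1, (hfree l hl hlu).2,
        fun h => (mem_erase.1 ((hψ l (mem_erase.2 ⟨hlu, hl⟩)).1)).1 h.symm⟩
    · simp only [hlu, hl'u, if_false, Function.update_of_ne, ne_eq, not_false_eq_true] at h ⊢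
      exact htri l (mem_erase.2 ⟨hlu, hl⟩) l' (mem_erase.2 ⟨hl'u, hl'⟩) (by omega)

end Pivots

/-- The `X` left of the diagonal keeps the row in `𝓜`. On a self-loop `I = J` the diagonal `1`
is added to the leading monomial, except for `D = 0`, where `X ^ 0` already is that `1`. -/
noncomputable def pivotRow (R : Type*) [Semiring R] (I J D ψ c : ℕ) : R[X] :=
  if c = J then (if I = J ∧ D ≠ 0 then X ^ D + 1 else X ^ D)
  else if c = I then 1
  else if c = ψ then (if I < c then 1 else X)
  else 0

section PivotRow

variable {R : Type*} [CommSemiring R] {n I J D ψ c : ℕ}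

theorem pivotRow_right : pivotRow R I J D ψ J = if I = J ∧ D ≠ 0 then X ^ D + 1 else X ^ D :=
  if_pos rfl

theorem pivotRow_left (h : I ≠ J) : pivotRow R I J D ψ I = 1 := by
  simp [pivotRow, h]

theorem pivotRow_pivot (hψJ : ψ ≠ J) (hψI : ψ ≠ I) :
    pivotRow R I J D ψ ψ = if I < ψ then 1 else X := by
  simp [pivotRow, hψJ, hψI]

theorem pivotRow_of_ne (hcI : c ≠ I) (hcJ : c ≠ J) (hcψ : c ≠ ψ) : pivotRow R I J D ψ c = 0 := by
  simp [pivotRow, hcI, hcJ, hcψ]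

theorem eval_zero_pivotRow_of_lt (hD : J < I → D ≠ 0) (hc : c < I) :
    (pivotRow R I J D ψ c).eval 0 = 0 := by
  by_cases hcJ : c = J
  · subst hcJ
    rw [pivotRow_right, if_neg (by omega)]
    simp [zero_pow (hD hc)]
  by_cases hcψ : c = ψ
  · subst hcψ
    rw [pivotRow_pivot hcJ hc.ne, if_neg hc.not_gt, eval_X]
  · rw [pivotRow_of_ne hc.ne hcJ hcψ, eval_zero]

theorem eval_zero_pivotRow_self : (pivotRow R I J D ψ I).eval 0 = 1 := by
  by_cases hIJ : I = J
  · subst hIJ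
    rw [pivotRow_right]
    split_ifs with hD
    · simp [zero_pow hD.2]
    · simp [show D = 0 by tauto]
  · simp [pivotRow_left hIJ]

theorem exists_pivotRow_pivot_eq_X_pow (hψ : PivotWindow n I J D ψ) :
    ∃ e, pivotRow R I J D ψ ψ = X ^ e := by
  by_cases hψJ : ψ = J
  · subst hψJ
    unfold PivotWindow at hψ
    rw [pivotRow_right, if_neg (by omega)]
    exact ⟨D, rfl⟩
  by_cases hψI : ψ = I
  · subst hψI
    exact ⟨0, by rw [pivotRow_left hψJ, pow_zero]⟩
  · rw [pivotRow_pivot hψJ hψI]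
    split_ifs
    exacts [⟨0, (pow_zero _).symm⟩, ⟨1, (pow_one _).symm⟩]

variable [Nontrivial R]

theorem degree_pivotRow_right : (pivotRow R I J D ψ J).degree = D := by
  rw [pivotRow_right]
  split_ifs with h
  · simpa using degree_X_pow_add_C (R := R) (Nat.pos_of_ne_zero h.2) 1
  · exact degree_X_pow D

theorem pivotRow_right_ne_zero : pivotRow R I J D ψ J ≠ 0 :=
  ne_zero_of_coe_le_degree degree_pivotRow_right.ge

theorem natDegree_pivotRow_lt (hIn : I < n) (hD : J < I → D ≠ 0) (hψ : PivotWindow n I J D ψ)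
    (hcJ : c ≠ J) (hc : pivotRow R I J D ψ c ≠ 0) :
    n * (pivotRow R I J D ψ c).natDegree + c < n * D + J := by
  have hnD : D ≠ 0 → n ≤ n * D := fun h => Nat.le_mul_of_pos_right n (Nat.pos_of_ne_zero h)
  by_cases hcI : c = I
  · subst hcI
    rw [pivotRow_left hcJ, natDegree_one]
    omega
  by_cases hcψ : c = ψ
  · subst hcψ
    unfold PivotWindow at hψ
    rw [pivotRow_pivot hcJ hcI]
    split_ifs
    · rw [natDegree_one]
      omega
    · rw [natDegree_X]
      omega
  · exact absurd (pivotRow_of_ne hcI hcJ hcψ) hc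

end PivotRow

section DegMat

variable {F : Type*} [Field F] {n : ℕ} {M : Matrix (Fin n) (Fin n) F[X]} {a b : Fin n} {ν : ℕ}

theorem degMat_eq_coe (h0 : M a b ≠ 0) (h : n * (M a b).natDegree + b = ν + a) :
    degMat M a b = ((ν : ℤ) : WithBot ℤ) := by
  rw [degMat, of_apply, degree_eq_natDegree h0, Nat.cast_withBot, WithBot.map_coe, WithBot.coe_inj]
  zify at h
  linarith

theorem degMat_lt_coe (h : M a b ≠ 0 → n * (M a b).natDegree + b < ν + a) :
    degMat M a b < ((ν : ℤ) : WithBot ℤ) := by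
  by_cases h0 : M a b = 0
  · simp [degMat, h0]
  · rw [degMat, of_apply, degree_eq_natDegree h0, Nat.cast_withBot, WithBot.map_coe,
      WithBot.coe_lt_coe]
    have := h h0
    zify at this
    linarith

end DegMat

section PivotMatrix

variable (F : Type*) [Field F] {n k : ℕ} (i j : Fin k → Fin n) (D ψ : Fin k → ℕ)

noncomputable def pivotRows : Matrix (Fin k) (Fin n) F[X] :=
  of fun l b => pivotRow F (i l) (j l) (D l) (ψ l) b

noncomputable def pivotMatrix : Matrix (Fin n) (Fin n) F[X] :=
  of (Function.extend i (pivotRows F i j D ψ) 0)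

variable {F i j D ψ}

theorem pivotMatrix_apply (hi : Function.Injective i) (l : Fin k) :
    pivotMatrix F i j D ψ (i l) = pivotRows F i j D ψ l :=
  hi.extend_apply _ _ l

theorem pivotMatrix_eq_zero {a : Fin n} (ha : ¬∃ l, i l = a) : pivotMatrix F i j D ψ a = 0 :=
  Function.extend_apply' _ _ _ ha

theorem pivotMatrix_ne_zero_iff (hi : Function.Injective i) (a : Fin n) :
    pivotMatrix F i j D ψ a ≠ 0 ↔ ∃ l, a = i l := by
  constructor
  · intro h
    by_contra h'
    exact h (pivotMatrix_eq_zero fun ⟨l, hl⟩ => h' ⟨l, hl.symm⟩)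
  · rintro ⟨l, rfl⟩ h
    rw [pivotMatrix_apply hi] at h
    exact pivotRow_right_ne_zero (congrFun h (j l))

theorem inM_pivotMatrix (hi : Function.Injective i) (hD : ∀ l, (j l : ℕ) < i l → D l ≠ 0) :
    InM (pivotMatrix F i j D ψ) := by
  intro a b hba
  by_cases ha : ∃ l, i l = a
  · obtain ⟨l, rfl⟩ := ha
    rw [pivotMatrix_apply hi]
    exact eval_zero_pivotRow_of_lt (hD l) hba
  · rw [pivotMatrix_eq_zero ha]
    exact eval_zero

theorem delayFree_pivotMatrix (hi : Function.Injective i) : DelayFree (pivotMatrix F i j D ψ) := by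
  intro a ha
  obtain ⟨l, rfl⟩ := (pivotMatrix_ne_zero_iff hi a).1 ha
  rw [pivotMatrix_apply hi, pivotRows, of_apply, eval_zero_pivotRow_self]
  exact one_ne_zero

variable {ν : Fin k → ℕ}

theorem degMat_pivotMatrix_right (hi : Function.Injective i)
    (hν : ∀ l, n * D l + j l = ν l + i l) (l : Fin k) :
    degMat (pivotMatrix F i j D ψ) (i l) (j l) = ((ν l : ℤ) : WithBot ℤ) := by
  refine degMat_eq_coe ?_ ?_ <;> rw [pivotMatrix_apply hi, pivotRows, of_apply]
  · exact pivotRow_right_ne_zero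
  · rw [natDegree_eq_of_degree_eq_some degree_pivotRow_right]
    exact hν l

theorem degMat_pivotMatrix_lt (hi : Function.Injective i) (hD : ∀ l, (j l : ℕ) < i l → D l ≠ 0)
    (hW : ∀ l, PivotWindow n (i l) (j l) (D l) (ψ l)) (hν : ∀ l, n * D l + j l = ν l + i l)
    {l : Fin k} {b : Fin n} (hb : b ≠ j l) :
    degMat (pivotMatrix F i j D ψ) (i l) b < ((ν l : ℤ) : WithBot ℤ) := by
  refine degMat_lt_coe fun h0 => ?_
  rw [pivotMatrix_apply hi, pivotRows, of_apply] at h0 ⊢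
  have := natDegree_pivotRow_lt (i l).2 (hD l) (hW l) (Fin.val_ne_of_ne hb) h0
  have := hν l
  omega

theorem sup_degMat_pivotMatrix (hi : Function.Injective i) (hD : ∀ l, (j l : ℕ) < i l → D l ≠ 0)
    (hW : ∀ l, PivotWindow n (i l) (j l) (D l) (ψ l)) (hν : ∀ l, n * D l + j l = ν l + i l)
    (l : Fin k) :
    Finset.univ.sup (fun b => degMat (pivotMatrix F i j D ψ) (i l) b) =
      ((ν l : ℤ) : WithBot ℤ) := by
  refine le_antisymm (Finset.sup_le fun b _ => ?_) ?_
  · rcases eq_or_ne b (j l) with rfl | hb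
    · exact (degMat_pivotMatrix_right hi hν l).le
    · exact (degMat_pivotMatrix_lt hi hD hW hν hb).le
  · exact (degMat_pivotMatrix_right hi hν l).symm.le.trans (Finset.le_sup (Finset.mem_univ _))

theorem semiReduced_pivotMatrix (hi : Function.Injective i) (hj : Function.Injective j)
    (hD : ∀ l, (j l : ℕ) < i l → D l ≠ 0) (hW : ∀ l, PivotWindow n (i l) (j l) (D l) (ψ l))
    (hν : ∀ l, n * D l + j l = ν l + i l) : SemiReduced (pivotMatrix F i j D ψ) := by
  have hmax : ∀ l b, degMat (pivotMatrix F i j D ψ) (i l) b =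
      Finset.univ.sup (fun c => degMat (pivotMatrix F i j D ψ) (i l) c) → b = j l := by
    intro l b h
    by_contra hb
    rw [sup_degMat_pivotMatrix hi hD hW hν] at h
    exact (degMat_pivotMatrix_lt hi hD hW hν hb).ne h
  intro a a' b hne ha ha' h h'
  obtain ⟨l, rfl⟩ := (pivotMatrix_ne_zero_iff hi a).1 ha
  obtain ⟨l', rfl⟩ := (pivotMatrix_ne_zero_iff hi a').1 ha'
  exact hne (congrArg i (hj ((hmax l b h).symm.trans (hmax l' b h'))))

theorem eval_zero_det_pivotRows_submatrix (hi : Function.Injective i)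
    (hD : ∀ l, (j l : ℕ) < i l → D l ≠ 0) :
    ((pivotRows F i j D ψ).submatrix id i).det.eval 0 = 1 := by
  rw [← coe_evalRingHom, RingHom.map_det, det_eq_prod_diag_of_blockTriangular (b := i) ?_ hi]
  · simp [pivotRows, eval_zero_pivotRow_self]
  · intro l l' h
    exact eval_zero_pivotRow_of_lt (hD l) h

theorem det_pivotRows_submatrix_pivot (hψn : ∀ l, ψ l < n)
    (hW : ∀ l, PivotWindow n (i l) (j l) (D l) (ψ l)) {key : Fin k → ℕ}
    (hkey : Function.Injective key)
    (htri : ∀ l l', key l' < key l → ψ l' ≠ i l ∧ ψ l' ≠ j l ∧ ψ l' ≠ ψ l) :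
    ∃ N, ((pivotRows F i j D ψ).submatrix id fun l => ⟨ψ l, hψn l⟩).det = X ^ N := by
  choose e he using fun l => exists_pivotRow_pivot_eq_X_pow (R := F) (hW l)
  refine ⟨∑ l, e l, ?_⟩
  rw [det_eq_prod_diag_of_blockTriangular (b := key) ?_ hkey]
  · simp [pivotRows, he, Finset.prod_pow_eq_pow_sum]
  · intro l l' h
    obtain ⟨h1, h2, h3⟩ := htri l l' h
    exact pivotRow_of_ne h1 h2 h3

theorem isBasic_pivotMatrix (hi : Function.Injective i) (hD : ∀ l, (j l : ℕ) < i l → D l ≠ 0)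
    (hψn : ∀ l, ψ l < n) (hW : ∀ l, PivotWindow n (i l) (j l) (D l) (ψ l)) {key : Fin k → ℕ}
    (hkey : Function.Injective key)
    (htri : ∀ l l', key l' < key l → ψ l' ≠ i l ∧ ψ l' ≠ j l ∧ ψ l' ≠ ψ l) :
    IsBasic (of fun l b => pivotMatrix F i j D ψ (i l) b) := by
  have hrows : (of fun l b => pivotMatrix F i j D ψ (i l) b) = pivotRows F i j D ψ := by
    ext l b
    rw [of_apply, pivotMatrix_apply hi]
  obtain ⟨N, hN⟩ := det_pivotRows_submatrix_pivot (F := F) hψn hW hkey htri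
  rw [hrows]
  refine exists_mul_eq_one_of_isCoprime_det _ i (fun l => ⟨ψ l, hψn l⟩) ?_
  rw [hN]
  exact isCoprime_X_pow_of_eval_zero_ne_zero
    (by rw [eval_zero_det_pivotRows_submatrix hi hD]; exact one_ne_zero) N

end PivotMatrix

theorem exists_mul_add_eq_of_modEq {n a b ν : ℕ} (hb : b < n) (h : (b : ℤ) - a ≡ ν [ZMOD n]) :
    ∃ d, n * d + b = ν + a := by
  obtain ⟨m, hm⟩ := h.dvd
  have hm0 : 0 ≤ m := by nlinarith
  refine ⟨m.toNat, ?_⟩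
  zify
  rw [Int.toNat_of_nonneg hm0]
  linarith

theorem exists_semiReduced_basic_with_rowMax_general {F : Type*} [Field F] {n k : ℕ}
    (hn : 2 ≤ n) (hk : k ≤ n - 1) (ν : Fin k → ℕ)
    (i j : Fin k → Fin n) (hi : Function.Injective i) (hj : Function.Injective j)
    (hcong : ∀ l : Fin k, ((j l : ℕ) : ℤ) - ((i l : ℕ) : ℤ) ≡ (ν l : ℤ) [ZMOD n]) :
    ∃ M : Matrix (Fin n) (Fin n) (Polynomial F), InM M ∧ DelayFree M ∧ SemiReduced M ∧
      (∀ a : Fin n, M a ≠ 0 ↔ ∃ l : Fin k, a = i l) ∧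
      IsBasic (Matrix.of fun (l : Fin k) (b : Fin n) => M (i l) b) ∧
      (∀ l : Fin k,
        Finset.univ.sup (fun b => degMat M (i l) b) = ((ν l : ℤ) : WithBot ℤ)) := by
  choose D hν using fun l => exists_mul_add_eq_of_modEq (j l).2 (hcong l)
  have hD : ∀ l, (j l : ℕ) < i l → D l ≠ 0 := fun l hlt h0 => by
    have := hν l
    rw [h0, mul_zero] at this
    omega
  obtain ⟨ψ, key, hψ, hkey, htri⟩ := exists_pivots (n := n) (D := D)
    (Fin.val_injective.comp hi) (Fin.val_injective.comp hj) hD Finset.univ (Finset.range n)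
    (fun c => Finset.mem_range.1) (Finset.image_subset_iff.2 fun l _ => Finset.mem_range.2 (j l).2)
    (by simp only [Finset.card_univ, Fintype.card_fin, Finset.card_range]; omega)
  have hψn : ∀ l, ψ l < n := fun l => Finset.mem_range.1 (hψ l (Finset.mem_univ l)).1
  have hW : ∀ l, PivotWindow n (i l) (j l) (D l) (ψ l) := fun l => (hψ l (Finset.mem_univ l)).2
  exact ⟨pivotMatrix F i j D ψ, inM_pivotMatrix hi hD, delayFree_pivotMatrix hi,
    semiReduced_pivotMatrix hi hj hD hW hν, pivotMatrix_ne_zero_iff hi,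
    isBasic_pivotMatrix hi hD hψn hW (fun a b h => hkey (by simp) (by simp) h)
      (fun l l' h => htri l (by simp) l' (by simp) h),
    sup_degMat_pivotMatrix hi hD hW hν⟩

/-- Let `1 ≤ k ≤ n−1` and `ν_1,…,ν_k ∈ ℕ`.  If there are pairwise
different rows `i_1,…,i_k ∈ {1,…,n−1}` and pairwise different columns
`j_1,…,j_k ∈ {1,…,n}` with `j_l − i_l ≡ ν_l (mod n)`, then there is a delay-free
semi-reduced `M ∈ 𝓜` with support `{i_1,…,i_k}`, whose nonzero rows form a basic matrix,
and whose `i_l`-th row maximum of `𝒟(M)` equals `ν_l` for all `l`. -/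
theorem exists_semiReduced_basic_with_rowMax {F : Type*} [Field F] [Fintype F] {n k : ℕ}
    (hn : 2 ≤ n) (hk1 : 1 ≤ k) (hk : k ≤ n - 1) (ν : Fin k → ℕ)
    (i j : Fin k → Fin n) (hi : Function.Injective i) (hj : Function.Injective j)
    (hirange : ∀ l : Fin k, (i l : ℕ) < n - 1)
    (hcong : ∀ l : Fin k, ((j l : ℕ) : ℤ) - ((i l : ℕ) : ℤ) ≡ (ν l : ℤ) [ZMOD n]) :
    ∃ M : Matrix (Fin n) (Fin n) (Polynomial F), InM M ∧ DelayFree M ∧ SemiReduced M ∧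
      (∀ a : Fin n, M a ≠ 0 ↔ ∃ l : Fin k, a = i l) ∧
      IsBasic (Matrix.of fun (l : Fin k) (b : Fin n) => M (i l) b) ∧
      (∀ l : Fin k,
        Finset.univ.sup (fun b => degMat M (i l) b) = ((ν l : ℤ) : WithBot ℤ)) :=
  exists_semiReduced_basic_with_rowMax_general hn hk ν i j hi hj hcong
end

section
/- Let n ≥ 2, let 1 ≤ k ≤ n−1, and let r_1,…,r_k ∈ ℤ/nℤ. Suppose there exist pairwise different i_1,…,i_k ∈ ℤ/nℤ and pairwise different j_1,…,j_k ∈ ℤ/nℤ with j_l − i_l = r_l for all l. Then for any prescribed β ∈ ℤ/nℤ there exist pairwise different i'_1,…,i'_k ∈ ℤ/nℤ with i'_l ≠ β for all l, and pairwise different j'_1,…,j'_k ∈ ℤ/nℤ, such that j'_l − i'_l = r_l for all l. -/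
/-!
Translating a solution `(i, j)` by a common constant `c` keeps both families injective and
all differences `j l - i l` unchanged.  Only the `k < n` values `β - i l` are excluded for `c`,
so some translate avoids the row `β`.
-/

theorem exists_add_ne_of_card_lt {ι G : Type*} [Fintype ι] [AddGroup G] [Fintype G]
    (f : ι → G) (h : Fintype.card ι < Fintype.card G) (b : G) :
    ∃ c, ∀ x, f x + c ≠ b := by
  have hns : ¬ Function.Surjective (fun x => -f x + b) :=
    fun hs => (Fintype.card_le_of_surjective _ hs).not_gt h
  obtain ⟨c, hc⟩ := not_forall.mp hns
  refine ⟨c, fun x hx => hc ⟨x, ?_⟩⟩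
  simp only [← hx, neg_add_cancel_left]

theorem rook_solution_avoiding_row_general (n k : ℕ) (hn : 2 ≤ n) (hk : k ≤ n - 1)
    (r : Fin k → ZMod n) (i j : Fin k → ZMod n)
    (hi : Function.Injective i) (hj : Function.Injective j)
    (hsol : ∀ l : Fin k, j l - i l = r l) (β : ZMod n) :
    ∃ i' j' : Fin k → ZMod n,
      Function.Injective i' ∧ Function.Injective j' ∧
      (∀ l : Fin k, i' l ≠ β) ∧ (∀ l : Fin k, j' l - i' l = r l) := by
  have : NeZero n := ⟨by omega⟩
  obtain ⟨c, hc⟩ := exists_add_ne_of_card_lt i (by rw [Fintype.card_fin, ZMod.card]; omega) β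
  refine ⟨(· + c) ∘ i, (· + c) ∘ j, (add_left_injective c).comp hi,
    (add_left_injective c).comp hj, hc, fun l => ?_⟩
  simp only [Function.comp_apply, add_sub_add_right_eq_sub, hsol]

/-- If the modified rook problem for `r_1,…,r_k ∈ ℤ/nℤ` has a solution
(pairwise different `i_l` and pairwise different `j_l` with `j_l − i_l = r_l`), then for
any prescribed `β ∈ ℤ/nℤ` there is a solution avoiding the row `β`. -/
theorem rook_solution_avoiding_row (n k : ℕ) (hn : 2 ≤ n) (hk1 : 1 ≤ k) (hk : k ≤ n - 1)
    (r : Fin k → ZMod n) (i j : Fin k → ZMod n)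
    (hi : Function.Injective i) (hj : Function.Injective j)
    (hsol : ∀ l : Fin k, j l - i l = r l) (β : ZMod n) :
    ∃ i' j' : Fin k → ZMod n,
      Function.Injective i' ∧ Function.Injective j' ∧
      (∀ l : Fin k, i' l ≠ β) ∧ (∀ l : Fin k, j' l - i' l = r l) :=
  rook_solution_avoiding_row_general n k hn hk r i j hi hj hsol β
end

section
/- Let n ≥ 2 and let k be an integer with 1 ≤ k ≤ (n+1)/2. Then for any r_1,…,r_k ∈ ℤ/nℤ there exist pairwise different i_1,…,i_k ∈ ℤ/nℤ and pairwise different j_1,…,j_k ∈ ℤ/nℤ such that j_l − i_l = r_l for all l = 1,…,k. -/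
/-!
Choose the rows `i_1, i_2, …` greedily. When `i_1, …, i_m` are placed, the new row `x` must avoid
the `m` used rows and the `m` values `j_l - r_{m+1}`, so it exists as long as `2m < n`, which is
exactly `2k ≤ n + 1` at the last step `m = k - 1`.
-/

open Function

variable {G : Type*} [AddGroup G] [Fintype G]

theorem exists_notMem_range_and_add_notMem_range {ι : Type*} [Fintype ι] (f g : ι → G) (a : G)
    (h : 2 * Fintype.card ι < Fintype.card G) :
    ∃ x, x ∉ Set.range f ∧ x + a ∉ Set.range g := by
  classical
  let forbidden := Finset.univ.image f ∪ Finset.univ.image (fun m => g m - a)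
  have hcard : forbidden.card < (Finset.univ : Finset G).card :=
    calc forbidden.card
        ≤ (Finset.univ.image f).card + (Finset.univ.image (fun m => g m - a)).card :=
          Finset.card_union_le _ _
      _ ≤ Fintype.card ι + Fintype.card ι := add_le_add Finset.card_image_le Finset.card_image_le
      _ < _ := by rw [Finset.card_univ]; omega
  obtain ⟨x, -, hx⟩ := Finset.exists_mem_notMem_of_card_lt_card hcard
  refine ⟨x, fun ⟨m, hm⟩ => hx ?_, fun ⟨m, hm⟩ => hx ?_⟩
  · exact Finset.mem_union_left _ (hm ▸ Finset.mem_image_of_mem f (Finset.mem_univ m))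
  · exact Finset.mem_union_right _
      (Finset.mem_image.2 ⟨m, Finset.mem_univ m, by rw [hm, add_sub_cancel_right]⟩)

theorem exists_injective_and_injective_add {k : ℕ} (hk : 2 * k ≤ Fintype.card G + 1)
    (r : Fin k → G) : ∃ i : Fin k → G, Injective i ∧ Injective (i + r) := by
  induction k with
  | zero => exact ⟨Fin.elim0, injective_of_subsingleton _, injective_of_subsingleton _⟩
  | succ k ih =>
    obtain ⟨i, hi, hir⟩ := ih (by omega) (Fin.tail r)
    obtain ⟨x, hx, hxr⟩ := exists_notMem_range_and_add_notMem_range i (i + Fin.tail r) (r 0)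
      (by rw [Fintype.card_fin]; omega)
    refine ⟨Fin.cons x i, Fin.cons_injective_iff.2 ⟨hx, hi⟩, ?_⟩
    have hcons : (Fin.cons x i : Fin (k + 1) → G) + r = Fin.cons (x + r 0) (i + Fin.tail r) :=
      (Fin.cons_self_tail _).symm
    rw [hcons]
    exact Fin.cons_injective_iff.2 ⟨hxr, hir⟩

theorem rook_solvable_of_small_k_general (n k : ℕ) (hk1 : 1 ≤ k)
    (hk : 2 * k ≤ n + 1) (r : Fin k → ZMod n) :
    ∃ i j : Fin k → ZMod n,
      Function.Injective i ∧ Function.Injective j ∧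
      ∀ l : Fin k, j l - i l = r l := by
  have : NeZero n := ⟨by omega⟩
  obtain ⟨i, hi, hir⟩ := exists_injective_and_injective_add (by rwa [ZMod.card]) r
  exact ⟨i, i + r, hi, hir, fun l => add_sub_cancel_left (i l) (r l)⟩

/-- For `1 ≤ k ≤ (n+1)/2`, the modified rook problem is solvable for
any `r_1,…,r_k ∈ ℤ/nℤ`: there are pairwise different `i_1,…,i_k` and pairwise different
`j_1,…,j_k` in `ℤ/nℤ` with `j_l − i_l = r_l` for all `l`. -/
theorem rook_solvable_of_small_k (n k : ℕ) (hn : 2 ≤ n) (hk1 : 1 ≤ k)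
    (hk : 2 * k ≤ n + 1) (r : Fin k → ZMod n) :
    ∃ i j : Fin k → ZMod n,
      Function.Injective i ∧ Function.Injective j ∧
      ∀ l : Fin k, j l - i l = r l :=
  rook_solvable_of_small_k_general n k hk1 hk r
end

section
/- The set 𝒮 ⊆ (ℤ/nℤ)^{n−1} has the following properties: (i) γ·(1,…,1) ∈ 𝒮 for all γ ∈ ℤ/nℤ; (ii) if r ∈ 𝒮 then τ(r) ∈ 𝒮 for every permutation τ of the n−1 coordinates; (iii) if r ∈ 𝒮 then γ·r ∈ 𝒮 for every unit γ of the ring ℤ/nℤ; (iv) if r ∈ 𝒮 then r + γ·(1,…,1) ∈ 𝒮 for all γ ∈ ℤ/nℤ; (v) 𝒫 ⊆ 𝒮, i.e., every tuple in (ℤ/nℤ)^{n−1} with pairwise different entries is the sum of two tuples each having pairwise different entries. -/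
/-- `𝒫`: the set of `(n−1)`-tuples over `ℤ/nℤ` with pairwise different entries. -/
def PP (n : ℕ) : Set (Fin (n - 1) → ZMod n) :=
  {x | Function.Injective x}

/-- `𝒮`: the set of `(n−1)`-tuples over `ℤ/nℤ` expressible as a sum of two tuples each
having pairwise different entries. -/
def SS (n : ℕ) : Set (Fin (n - 1) → ZMod n) :=
  {r | ∃ x ∈ PP n, ∃ y ∈ PP n, r = x + y}

/-! An injective `(n-1)`-tuple over `ℤ/nℤ` misses exactly one residue, so any two such tuples
differ by a permutation of the coordinates followed by the addition of a constant. Since `𝒮` is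
closed under both operations, `𝒫 ⊆ 𝒮` reduces to exhibiting one injective tuple in `𝒮`. With
`e = (0, 1, …, n-2)`, for odd `n` the tuple `e + e = 2e` works because `2` is a unit; for even `n`
one adds to `e` the tuple obtained from it by skipping the value `n/2`. -/

open Function Set

theorem Function.Injective.exists_range_eq_compl_singleton {ι α : Type*} [Finite α]
    {f : ι → α} (hf : Injective f) (hcard : Nat.card ι + 1 = Nat.card α) :
    ∃ a, range f = {a}ᶜ := by
  obtain ⟨a, ha⟩ := ncard_eq_one.mp <|
    ncard_compl_of_ncard_eq_add (range f) (by rw [ncard_range_of_injective hf]; omega)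
  exact ⟨a, by rw [← ha, compl_compl]⟩

theorem Function.Injective.exists_perm_comp_eq_of_range_eq {ι α : Type*} {f g : ι → α}
    (hf : Injective f) (hg : Injective g) (h : range f = range g) :
    ∃ σ : Equiv.Perm ι, f = g ∘ σ := by
  refine ⟨(Equiv.ofInjective f hf).trans ((Equiv.setCongr h).trans (Equiv.ofInjective g hg).symm),
    funext fun i => ?_⟩
  simp [Equiv.apply_ofInjective_symm]

theorem Function.Injective.exists_perm_add_const_eq {ι G : Type*} [AddGroup G] [Finite G]
    {f g : ι → G} (hf : Injective f) (hg : Injective g) (hcard : Nat.card ι + 1 = Nat.card G) :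
    ∃ (σ : Equiv.Perm ι) (c : G), f = (g ∘ σ) + fun _ => c := by
  obtain ⟨a, ha⟩ := hf.exists_range_eq_compl_singleton hcard
  obtain ⟨b, hb⟩ := hg.exists_range_eq_compl_singleton hcard
  have hrange : range f = range (fun i => g i + (-b + a)) := by
    ext y
    have hshift : y ∈ range (fun i => g i + (-b + a)) ↔ y - (-b + a) ∈ range g := by
      simp only [mem_range, eq_sub_iff_add_eq]
    rw [hshift, ha, hb]
    simp only [mem_compl_iff, mem_singleton_iff, sub_eq_iff_eq_add, add_neg_cancel_left]
  obtain ⟨σ, hσ⟩ := hf.exists_perm_comp_eq_of_range_eq ((add_left_injective _).comp hg) hrange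
  exact ⟨σ, -b + a, hσ⟩

theorem Function.Injective.natCast_comp {ι : Type*} {n : ℕ} {f : ι → ℕ} (hf : Injective f)
    (hlt : ∀ i, f i < n) : Injective fun i => (f i : ZMod n) := by
  intro i j h
  apply hf
  rwa [ZMod.natCast_eq_natCast_iff', Nat.mod_eq_of_lt (hlt i), Nat.mod_eq_of_lt (hlt j)] at h

theorem natCast_val_mem_PP (n : ℕ) : (fun l : Fin (n - 1) => ((l : ℕ) : ZMod n)) ∈ PP n :=
  Fin.val_injective.natCast_comp fun l => by omega

theorem const_mem_SS {n : ℕ} {x : Fin (n - 1) → ZMod n} (hx : x ∈ PP n) (γ : ZMod n) :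
    (fun _ => γ) ∈ SS n :=
  ⟨x, hx, fun l => γ - x l, sub_right_injective.comp hx, by ext; simp⟩

theorem comp_perm_mem_SS {n : ℕ} {r : Fin (n - 1) → ZMod n} (hr : r ∈ SS n)
    (τ : Equiv.Perm (Fin (n - 1))) : r ∘ τ ∈ SS n := by
  obtain ⟨x, hx, y, hy, rfl⟩ := hr
  exact ⟨x ∘ τ, hx.comp τ.injective, y ∘ τ, hy.comp τ.injective, rfl⟩

theorem units_mul_mem_SS {n : ℕ} {r : Fin (n - 1) → ZMod n} (hr : r ∈ SS n)
    (γ : (ZMod n)ˣ) : (fun l => (γ : ZMod n) * r l) ∈ SS n := by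
  obtain ⟨x, hx, y, hy, rfl⟩ := hr
  exact ⟨_, γ.isUnit.mul_right_injective.comp hx, _, γ.isUnit.mul_right_injective.comp hy,
    by ext; simp [mul_add]⟩

theorem add_const_mem_SS {n : ℕ} {r : Fin (n - 1) → ZMod n} (hr : r ∈ SS n) (γ : ZMod n) :
    (r + fun _ => γ) ∈ SS n := by
  obtain ⟨x, hx, y, hy, rfl⟩ := hr
  exact ⟨x + fun _ => γ, (add_left_injective γ).comp hx, y, hy, by ext; simp [add_right_comm]⟩

theorem exists_mem_PP_inter_SS_of_odd {n : ℕ} (hn : Odd n) : (PP n ∩ SS n).Nonempty := by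
  have h2 : IsUnit (2 : ZMod n) := by
    exact_mod_cast (ZMod.isUnit_iff_coprime 2 n).mpr (Nat.coprime_two_left.mpr hn)
  set e := fun l : Fin (n - 1) => ((l : ℕ) : ZMod n)
  have he : e ∈ PP n := natCast_val_mem_PP n
  have hdouble : e + e = (2 * ·) ∘ e := by ext; simp [two_mul]
  exact ⟨e + e, hdouble ▸ h2.mul_right_injective.comp he, e, he, e, he, rfl⟩

-- The sums run through the even residues `0, 2, …, n-2` and then the odd ones `1, 3, …, n-3`.
theorem exists_mem_PP_inter_SS_of_even {n : ℕ} (hn : Even n) : (PP n ∩ SS n).Nonempty := by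
  obtain ⟨k, rfl⟩ := hn
  set skip : Fin (k + k - 1) → ℕ := fun l => if (l : ℕ) < k then l else l + 1
  set total : Fin (k + k - 1) → ℕ := fun l => if (l : ℕ) < k then 2 * l else 2 * l + 1 - (k + k)
  have hskip : (fun l => ((skip l : ℕ) : ZMod (k + k))) ∈ PP (k + k) :=
    Injective.natCast_comp (fun i j h => by ext; simp only [skip] at h; split_ifs at h <;> omega)
      fun l => by simp only [skip]; split_ifs <;> omega
  have htotal : (fun l => ((total l : ℕ) : ZMod (k + k))) ∈ PP (k + k) :=
    Injective.natCast_comp (fun i j h => by ext; simp only [total] at h; split_ifs at h <;> omega)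
      fun l => by simp only [total]; split_ifs <;> omega
  refine ⟨_, htotal, _, natCast_val_mem_PP (k + k), _, hskip, funext fun l => ?_⟩
  simp only [Pi.add_apply, skip, total]
  split_ifs
  · push_cast; ring
  · rw [Nat.cast_sub (by omega), ZMod.natCast_self]
    push_cast
    ring

theorem exists_mem_PP_inter_SS (n : ℕ) : (PP n ∩ SS n).Nonempty :=
  n.even_or_odd.elim exists_mem_PP_inter_SS_of_even exists_mem_PP_inter_SS_of_odd

theorem PP_subset_SS (n : ℕ) [NeZero n] : PP n ⊆ SS n := by
  obtain ⟨r, hrP, hrS⟩ := exists_mem_PP_inter_SS n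
  intro s hs
  have hcard : Nat.card (Fin (n - 1)) + 1 = Nat.card (ZMod n) := by
    rw [Nat.card_eq_fintype_card, Fintype.card_fin, Nat.card_zmod]
    have := NeZero.pos n
    omega
  obtain ⟨σ, c, rfl⟩ := Injective.exists_perm_add_const_eq hs hrP hcard
  exact add_const_mem_SS (comp_perm_mem_SS hrS σ) c

/-- The set `𝒮` satisfies: (i) all constant tuples belong to `𝒮`;
(ii) `𝒮` is stable under permutation of the coordinates; (iii) `𝒮` is stable under
multiplication by units of `ℤ/nℤ`; (iv) `𝒮` is stable under adding constant tuples;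
(v) `𝒫 ⊆ 𝒮`. -/
theorem SS_properties (n : ℕ) (hn : 2 ≤ n) :
    (∀ γ : ZMod n, (fun _ : Fin (n - 1) => γ) ∈ SS n) ∧
    (∀ r ∈ SS n, ∀ τ : Equiv.Perm (Fin (n - 1)), (r ∘ τ) ∈ SS n) ∧
    (∀ r ∈ SS n, ∀ γ : (ZMod n)ˣ, (fun l => (γ : ZMod n) * r l) ∈ SS n) ∧
    (∀ r ∈ SS n, ∀ γ : ZMod n, (r + fun _ => γ) ∈ SS n) ∧
    PP n ⊆ SS n := by
  have : NeZero n := ⟨by omega⟩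
  exact ⟨const_mem_SS (natCast_val_mem_PP n), fun _ hr => comp_perm_mem_SS hr,
    fun _ hr => units_mul_mem_SS hr, fun _ hr => add_const_mem_SS hr, PP_subset_SS n⟩
end

section
/- If r = (r_1,…,r_{n−1}) ∈ (ℤ/nℤ)^{n−1} has at most two different entries, i.e., |{r_1,…,r_{n−1}}| ≤ 2, then r ∈ 𝒮; that is, there exist x, y ∈ (ℤ/nℤ)^{n−1}, each with pairwise different entries, such that r = x + y. -/
/-! With `r` taking the value `a` on the index set `A` and `b` on `B`, and `x` injective, the
difference `y = r - x` is injective as soon as `x(A)` avoids `x(B) + (a - b)`. So send `B` into a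
set `S` with `S + (a - b) ⊆ S ∪ {e}` (full cosets of `⟨a - b⟩` plus one arithmetic progression of
difference `a - b`) and `A` into the complement of `S ∪ {e}`; it is large enough because there
are only `n - 1` indices. -/

open Function Finset

theorem Set.exists_subset_pair_of_ncard_le_two {α : Type*} [Nonempty α] {s : Set α}
    (hs : s.Finite) (h : s.ncard ≤ 2) : ∃ a b, s ⊆ {a, b} := by
  obtain rfl | ⟨a, ha⟩ := s.eq_empty_or_nonempty
  · exact ⟨Classical.arbitrary α, Classical.arbitrary α, Set.empty_subset _⟩
  have : (s \ {a}).ncard ≤ 1 := by rw [Set.ncard_sdiff_singleton_of_mem ha]; omega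
  obtain ⟨b, hb⟩ := (Set.ncard_le_one_iff_subset_singleton hs.sdiff).1 this
  exact ⟨a, b, Set.sdiff_singleton_subset_iff.1 hb⟩

/-- Grow the set along the orbit of the extra point, restarting at a fresh point whenever
the orbit closes up. -/
theorem Finset.exists_card_eq_image_subset_insert {α : Type*} [Fintype α] [DecidableEq α]
    (f : α → α) {m : ℕ} (hm : m < Fintype.card α) :
    ∃ S : Finset α, #S = m ∧ ∃ e ∉ S, S.image f ⊆ insert e S := by
  have exists_notMem (S : Finset α) (hS : #S < Fintype.card α) : ∃ e, e ∉ S := by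
    simpa using exists_mem_notMem_of_card_lt_card (s := S) (t := univ) (by rwa [card_univ])
  induction m with
  | zero =>
    obtain ⟨e, -⟩ := exists_notMem ∅ hm
    exact ⟨∅, rfl, e, notMem_empty e, by simp⟩
  | succ m ih =>
    obtain ⟨S, rfl, e, heS, hSe⟩ := ih (by omega)
    have hcard : #(insert e S) = #S + 1 := card_insert_of_notMem heS
    have himage : (insert e S).image f ⊆ insert (f e) (insert e S) := by
      rw [image_insert]
      exact insert_subset_insert _ hSe
    refine ⟨insert e S, hcard, ?_⟩
    by_cases hfe : f e ∈ insert e S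
    · obtain ⟨e', he'⟩ := exists_notMem (insert e S) (by omega)
      exact ⟨e', he', himage.trans (by rw [insert_eq_of_mem hfe]; exact subset_insert _ _)⟩
    · exact ⟨f e, hfe, himage⟩

theorem exists_injective_mem_of_card_le {ι α : Type*} [Fintype ι] (p : ι → Prop)
    [DecidablePred p] {S T : Finset α} (hST : Disjoint S T)
    (hS : Fintype.card {i // ¬p i} ≤ #S) (hT : Fintype.card {i // p i} ≤ #T) :
    ∃ x : ι → α, Injective x ∧ ∀ i, (p i → x i ∈ T) ∧ (¬p i → x i ∈ S) := by
  obtain ⟨u⟩ := Embedding.nonempty_of_card_le (α := {i // p i}) (β := T)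
    (by rwa [Fintype.card_coe])
  obtain ⟨v⟩ := Embedding.nonempty_of_card_le (α := {i // ¬p i}) (β := S)
    (by rwa [Fintype.card_coe])
  refine ⟨fun i => if h : p i then u ⟨i, h⟩ else v ⟨i, h⟩, ?_, fun i => ?_⟩
  · intro i j hij
    by_cases hi : p i <;> by_cases hj : p j <;> simp only [hi, hj, dite_true, dite_false] at hij
    · exact congrArg Subtype.val (u.injective (Subtype.ext hij))
    · exact disjoint_iff_ne.1 hST _ (v _).2 _ (u _).2 hij.symm |>.elim
    · exact disjoint_iff_ne.1 hST _ (v _).2 _ (u _).2 hij |>.elim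
    · exact congrArg Subtype.val (v.injective (Subtype.ext hij))
  · by_cases hi : p i <;> simp [hi]

theorem exists_injective_forall_ne_apply {ι α : Type*} [Fintype ι] [Fintype α]
    (f : α → α) (p : ι → Prop) (hcard : Fintype.card ι < Fintype.card α) :
    ∃ x : ι → α, Injective x ∧ ∀ i j, p i → ¬p j → x i ≠ f (x j) := by
  classical
  have hcompl := Fintype.card_subtype_compl p
  have hle := Fintype.card_subtype_le p
  obtain ⟨S, hS, e, heS, hSe⟩ :=
    exists_card_eq_image_subset_insert f (m := Fintype.card {i // ¬p i}) (by omega)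
  have hT : Fintype.card {i // p i} ≤ #(insert e S)ᶜ := by
    rw [card_compl, card_insert_of_notMem heS]
    omega
  obtain ⟨x, hx, hxST⟩ := exists_injective_mem_of_card_le p
    (disjoint_compl_right.mono_left (subset_insert e S)) hS.ge hT
  refine ⟨x, hx, fun i j hi hj hij => ?_⟩
  have : f (x j) ∈ insert e S := hSe (mem_image_of_mem f ((hxST j).2 hj))
  exact mem_compl.1 ((hxST i).1 hi) (hij ▸ this)

theorem exists_injective_add_eq_of_forall_eq_or_eq {ι G : Type*} [Fintype ι] [AddGroup G]
    [Fintype G] (hcard : Fintype.card ι < Fintype.card G) {r : ι → G} {a b : G}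
    (hr : ∀ i, r i = a ∨ r i = b) :
    ∃ x y : ι → G, Injective x ∧ Injective y ∧ r = x + y := by
  obtain ⟨x, hx, hcross⟩ := exists_injective_forall_ne_apply (a - b + ·) (r · = a) hcard
  refine ⟨x, -x + r, hx, fun i j hij => ?_, by simp⟩
  simp only [Pi.add_apply, Pi.neg_apply] at hij
  have cross {u v : G} (h : -u + a = -v + b) : u = a - b + v := by
    rw [neg_add_eq_iff_eq_add] at h
    simp [h, sub_eq_add_neg, add_assoc]
  have hb (k : ι) (hk : r k ≠ a) : r k = b := (hr k).resolve_left hk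
  by_cases hi : r i = a <;> by_cases hj : r j = a
  · rw [hi, hj] at hij
    exact hx (neg_injective (add_right_cancel hij))
  · rw [hi, hb j hj] at hij
    exact (hcross i j hi hj (cross hij)).elim
  · rw [hb i hi, hj] at hij
    exact (hcross j i hj hi (cross hij.symm)).elim
  · rw [hb i hi, hb j hj] at hij
    exact hx (neg_injective (add_right_cancel hij))

/-- If a tuple `r ∈ (ℤ/nℤ)^{n−1}` has at most two different entries,
then `r ∈ 𝒮`, i.e. `r` is the sum of two tuples each having pairwise different
entries. -/
theorem mem_SS_of_at_most_two_values (n : ℕ) (hn : 2 ≤ n) (r : Fin (n - 1) → ZMod n)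
    (h2 : (Set.range r).ncard ≤ 2) : r ∈ SS n := by
  have : NeZero n := ⟨by omega⟩
  obtain ⟨a, b, hab⟩ := Set.exists_subset_pair_of_ncard_le_two (Set.toFinite _) h2
  obtain ⟨x, y, hx, hy, hxy⟩ := exists_injective_add_eq_of_forall_eq_or_eq
    (by rw [Fintype.card_fin, ZMod.card]; omega) (fun i => hab (Set.mem_range_self i))
  exact ⟨x, hx, y, hy, hxy⟩
end
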